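/- arXiv:1407.0844 — 7 statements merged into one kernel-verified Lean document; each statement's English description precedes it below -/
import Mathlib

section
/- Let k be an algebraically closed field of characteristic zero, Γ a group, and Γ₀ a normal subgroup of Γ such that the quotient Γ/Γ₀ is a finite cyclic group. Let ρ₀ be an irreducible representation of Γ₀ on a finite-dimensional k-vector space V such that the conjugate representation ρ₀^s, defined by ρ₀^s(g) = ρ₀(s g s⁻¹), is isomorphic to ρ₀ for every s ∈ Γ. Then ρ₀ extends to a representation of Γ on V, i.e. there exists a representation ρ̃ of Γ on V whose restriction to Γ₀ equals ρ₀. -/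
/-- A representation is irreducible if its space is nonzero and the only invariant
subspaces are `⊥` and `⊤`. -/
def RepIrreducible {k Γ V : Type*} [CommSemiring k] [Monoid Γ] [AddCommMonoid V]
    [Module k V] (ρ : Representation k Γ V) : Prop :=
  Nontrivial V ∧ ∀ p : Submodule k V, (∀ g : Γ, ∀ v ∈ p, ρ g v ∈ p) → p = ⊥ ∨ p = ⊤

/-- Isomorphism of representations: a `k`-linear equivalence intertwining the actions. -/
def RepIso {k Γ V W : Type*} [CommSemiring k] [Monoid Γ] [AddCommMonoid V] [Module k V]
    [AddCommMonoid W] [Module k W] (ρ : Representation k Γ V)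
    (σ : Representation k Γ W) : Prop :=
  ∃ e : V ≃ₗ[k] W, ∀ (g : Γ) (v : V), e (ρ g v) = σ g (e v)

/-- Conjugation by `s ∈ Γ` as an endomorphism of a normal subgroup `Γ₀`. -/
def conjHom {Γ : Type*} [Group Γ] (Γ₀ : Subgroup Γ) [hN : Γ₀.Normal] (s : Γ) :
    Γ₀ →* Γ₀ where
  toFun g := ⟨s * (g : Γ) * s⁻¹, hN.conj_mem (g : Γ) g.2 s⟩
  map_one' := by ext; push_cast; group
  map_mul' g h := by ext; push_cast; group

/-- The conjugate representation `ρ₀ˢ` of a representation `ρ₀` of a normal subgroup `Γ₀`,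
defined by `ρ₀ˢ(g) = ρ₀(s g s⁻¹)`. -/
def conjRep {k Γ V : Type*} [CommSemiring k] [Group Γ] [AddCommMonoid V] [Module k V]
    (Γ₀ : Subgroup Γ) [Γ₀.Normal] (s : Γ) (ρ₀ : Representation k Γ₀ V) :
    Representation k Γ₀ V :=
  MonoidHom.comp ρ₀ (conjHom Γ₀ s)

/-! Choose `s ∈ Γ` whose image generates `Γ/Γ₀`, say of order `n`, and an intertwiner `T` with
`T ρ₀(g) T⁻¹ = ρ₀(s g s⁻¹)`. Then `ρ₀(sⁿ)⁻¹ Tⁿ` commutes with `ρ₀`, so it is a nonzero scalar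
by Schur's lemma, and rescaling `T` by an `n`-th root of its inverse achieves `Tⁿ = ρ₀(sⁿ)`.
Every element of `Γ` has the form `g sⁱ` with `g ∈ Γ₀`, and this normalisation makes
`g sⁱ ↦ ρ₀(g) Tⁱ` well defined; the conjugation relation makes it multiplicative. -/

section Extension

variable {G H : Type*} [Group G] [Group H] {N : Subgroup G} {φ : N →* H} {s : G} {T : H}

lemma map_mul_zpow_eq_of_coe_mul_zpow_eq
    (hpow : ∀ (g : N) (i : ℤ), (g : G) = s ^ i → φ g = T ^ i)
    {g g' : N} {i j : ℤ} (h : (g : G) * s ^ i = g' * s ^ j) :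
    φ g * T ^ i = φ g' * T ^ j := by
  have hx : ((g'⁻¹ * g : N) : G) = s ^ (j - i) := by
    rw [zpow_sub, Subgroup.coe_mul, Subgroup.coe_inv, inv_mul_eq_iff_eq_mul, ← mul_assoc, ← h]
    group
  rw [← mul_inv_cancel_left (φ g') (φ g), ← map_inv, mul_assoc, ← map_mul, hpow _ _ hx,
    ← zpow_add, sub_add_cancel]

variable [N.Normal]

@[simp]
lemma coe_conjHom (s : G) (g : N) : (conjHom N s g : G) = s * g * s⁻¹ := rfl

lemma conjHom_one_apply (g : N) : conjHom N 1 g = g := by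
  ext; simp

lemma conjHom_mul_apply (s t : G) (g : N) :
    conjHom N (s * t) g = conjHom N s (conjHom N t g) := by
  ext; simp only [coe_conjHom]; group

lemma zpow_mul_map_eq_map_conjHom_mul (hT : ∀ g, T * φ g = φ (conjHom N s g) * T)
    (i : ℤ) (g : N) : T ^ i * φ g = φ (conjHom N (s ^ i) g) * T ^ i := by
  induction i using Int.induction_on generalizing g with
  | zero => simp [conjHom_one_apply]
  | succ i ih =>
    rw [zpow_add_one, zpow_add_one, mul_assoc, hT, ← mul_assoc, ih, mul_assoc, conjHom_mul_apply]
  | pred i ih =>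
    have hT_inv : T⁻¹ * φ g = φ (conjHom N s⁻¹ g) * T⁻¹ := by
      rw [inv_mul_eq_iff_eq_mul, ← mul_assoc, hT, ← conjHom_mul_apply, mul_inv_cancel,
        conjHom_one_apply, mul_inv_cancel_right]
    rw [zpow_sub_one, zpow_sub_one, mul_assoc, hT_inv, ← mul_assoc, ih, mul_assoc,
      conjHom_mul_apply]

theorem exists_monoidHom_extension (hgen : ∀ γ : G, ∃ (g : N) (i : ℤ), (g : G) * s ^ i = γ)
    (hT : ∀ g, T * φ g = φ (conjHom N s g) * T)
    (hpow : ∀ (g : N) (i : ℤ), (g : G) = s ^ i → φ g = T ^ i) :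
    ∃ ψ : G →* H, ∀ g : N, ψ g = φ g := by
  choose g i hgi using hgen
  refine ⟨MonoidHom.mk' (fun γ ↦ φ (g γ) * T ^ i γ) fun a b ↦ ?_, fun x ↦ ?_⟩
  · have hab : ((g a * conjHom N (s ^ i a) (g b) : N) : G) * s ^ (i a + i b)
        = g (a * b) * s ^ i (a * b) := by
      rw [hgi, Subgroup.coe_mul, coe_conjHom, zpow_add]
      conv_rhs => rw [← hgi a, ← hgi b]
      group
    rw [← map_mul_zpow_eq_of_coe_mul_zpow_eq hpow hab, map_mul, zpow_add, mul_assoc, mul_assoc,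
      ← mul_assoc (T ^ i a), zpow_mul_map_eq_map_conjHom_mul hT, mul_assoc (φ _)]
  · simpa using map_mul_zpow_eq_of_coe_mul_zpow_eq hpow (j := 0) (g' := x)
      (by rw [hgi, zpow_zero, mul_one])

lemma pow_orderOf_mk_mem (s : G) : s ^ orderOf (s : G ⧸ N) ∈ N := by
  rw [← QuotientGroup.eq_one_iff, QuotientGroup.mk_pow, pow_orderOf_eq_one]

lemma map_eq_zpow_of_coe_eq_zpow
    (hn : ∀ g : N, (g : G) = s ^ orderOf (s : G ⧸ N) → φ g = T ^ orderOf (s : G ⧸ N))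
    (g : N) (i : ℤ) (hg : (g : G) = s ^ i) : φ g = T ^ i := by
  set n := orderOf (s : G ⧸ N)
  obtain ⟨m, rfl⟩ : (n : ℤ) ∣ i := by
    rw [orderOf_dvd_iff_zpow_eq_one, ← QuotientGroup.mk_zpow, ← hg, QuotientGroup.eq_one_iff]
    exact g.2
  have hg' : g = ⟨s ^ n, pow_orderOf_mk_mem s⟩ ^ m := Subtype.ext (by simp [hg, zpow_mul])
  rw [hg', map_zpow, hn _ rfl, zpow_mul, zpow_natCast]

lemma exists_coe_mul_zpow_eq (hs : ∀ x : G ⧸ N, x ∈ Subgroup.zpowers (s : G ⧸ N)) (γ : G) :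
    ∃ (g : N) (i : ℤ), (g : G) * s ^ i = γ := by
  obtain ⟨i, hi⟩ := Subgroup.mem_zpowers_iff.mp (hs γ)
  rw [← QuotientGroup.mk_zpow, QuotientGroup.eq_iff_div_mem] at hi
  exact ⟨⟨_, inv_mem_iff.mp (by simpa using hi)⟩, i, div_mul_cancel _ _⟩

end Extension

section Intertwiner

variable {k G V : Type*} [Field k] [AddCommGroup V] [Module k V]

lemma RepIrreducible.exists_eq_algebraMap [IsAlgClosed k] [FiniteDimensional k V] [Monoid G]
    {ρ : Representation k G V} (hρ : RepIrreducible ρ) {A : Module.End k V}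
    (hA : ∀ g, Commute A (ρ g)) : ∃ c : k, A = algebraMap k _ c := by
  have : Nontrivial V := hρ.1
  obtain ⟨c, hc⟩ := A.exists_eigenvalue
  refine ⟨c, ?_⟩
  rcases hρ.2 (A.eigenspace c) fun g _ hv ↦ A.mapsTo_genEigenspace_of_comm (hA g) c 1 hv with
    h | h
  · exact absurd h (Module.End.hasEigenvalue_iff.mp hc)
  · ext v
    rw [Module.algebraMap_end_apply, ← Module.End.mem_eigenspace_iff, h]
    trivial

lemma RepIrreducible.exists_central_pow_mul_eq_one [IsAlgClosed k] [FiniteDimensional k V]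
    [Monoid G] {ρ : Representation k G V} (hρ : RepIrreducible ρ) {A : (V →ₗ[k] V)ˣ}
    (hA : ∀ g, Commute (A : Module.End k V) (ρ g)) {n : ℕ} (hn : 0 < n) :
    ∃ u : (V →ₗ[k] V)ˣ, (∀ x, Commute u x) ∧ u ^ n * A = 1 := by
  obtain ⟨c, hc⟩ := hρ.exists_eq_algebraMap hA
  have : Nontrivial V := hρ.1
  have hc0 : c ≠ 0 := by
    rintro rfl
    simp at hc
  obtain ⟨μ, hμ⟩ := IsAlgClosed.exists_pow_nat_eq c⁻¹ hn
  have hμ0 : μ ≠ 0 := by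
    rintro rfl
    exact inv_ne_zero hc0 (by simpa [hn.ne'] using hμ.symm)
  refine ⟨Units.map (algebraMap k (Module.End k V)).toMonoidHom (Units.mk0 μ hμ0),
    fun x ↦ Units.ext (Algebra.commutes μ (x : Module.End k V)), Units.ext ?_⟩
  rw [Units.val_mul, Units.val_pow_eq_pow_val, hc]
  simp [← map_pow, ← map_mul, hμ, hc0]

variable [Group G] {N : Subgroup G} [N.Normal] {ρ : Representation k N V} {s : G}

lemma RepIso.exists_units_mul_eq (h : RepIso (conjRep N s ρ) ρ) :
    ∃ T : (V →ₗ[k] V)ˣ, ∀ g, T * ρ.asGroupHom g = ρ.asGroupHom (conjHom N s g) * T := by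
  obtain ⟨e, he⟩ := h
  refine ⟨LinearMap.GeneralLinearGroup.ofLinearEquiv e.symm, fun g ↦ ?_⟩
  ext v
  apply e.injective
  simpa [Representation.asGroupHom_apply, conjRep] using (he g (e.symm v)).symm

lemma RepIrreducible.exists_units_mul_eq_of_pow [IsAlgClosed k] [FiniteDimensional k V]
    (hρ : RepIrreducible ρ) {T : (V →ₗ[k] V)ˣ}
    (hT : ∀ g, T * ρ.asGroupHom g = ρ.asGroupHom (conjHom N s g) * T)
    {n : ℕ} {σ : N} (hσ : (σ : G) = s ^ n) :
    ∃ T' : (V →ₗ[k] V)ˣ, (∀ g, T' * ρ.asGroupHom g = ρ.asGroupHom (conjHom N s g) * T') ∧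
      T' ^ n = ρ.asGroupHom σ := by
  set φ := ρ.asGroupHom
  rcases n.eq_zero_or_pos with rfl | hn
  · obtain rfl : σ = 1 := Subtype.ext (by simpa using hσ)
    exact ⟨T, hT, by simp⟩
  set A := (φ σ)⁻¹ * T ^ n
  have hA : ∀ g, Commute A (φ g) := fun g ↦ by
    have hTn := zpow_mul_map_eq_map_conjHom_mul hT n g
    have hconj : conjHom N (s ^ (n : ℤ)) g = σ * g * σ⁻¹ := Subtype.ext (by simp [hσ])
    rw [zpow_natCast, hconj, map_mul, map_mul, map_inv] at hTn
    simp only [Commute, SemiconjBy, A, mul_assoc, hTn]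
    group
  obtain ⟨u, hu, huA⟩ := hρ.exists_central_pow_mul_eq_one (A := A) (fun g ↦ by
    simpa [φ, Representation.asGroupHom_apply] using (hA g).units_val) hn
  refine ⟨u * T, fun g ↦ ?_, ?_⟩
  · rw [mul_assoc, hT, ← mul_assoc, (hu _).eq, mul_assoc]
  · rw [(hu T).mul_pow, show T ^ n = φ σ * A by simp [A], ← mul_assoc,
      ((hu _).pow_left n).eq, mul_assoc, huA, mul_one]

end Intertwiner

theorem stmt3_general {k : Type} [Field k] [IsAlgClosed k]
    {Γ : Type} [Group Γ] {V : Type} [AddCommGroup V] [Module k V] [FiniteDimensional k V]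
    (Γ₀ : Subgroup Γ) [Γ₀.Normal] [IsCyclic (Γ ⧸ Γ₀)]
    (ρ₀ : Representation k Γ₀ V) (hirr : RepIrreducible ρ₀)
    (hconj : ∀ s : Γ, RepIso (conjRep Γ₀ s ρ₀) ρ₀) :
    ∃ ρext : Representation k Γ V, ∀ g : Γ₀, ρext (g : Γ) = ρ₀ g := by
  obtain ⟨q, hq⟩ := IsCyclic.exists_generator (α := Γ ⧸ Γ₀)
  obtain ⟨s, rfl⟩ := QuotientGroup.mk_surjective q
  obtain ⟨T₀, hT₀⟩ := (hconj s).exists_units_mul_eq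
  obtain ⟨T, hT, hTn⟩ :=
    hirr.exists_units_mul_eq_of_pow hT₀ (σ := ⟨_, pow_orderOf_mk_mem s⟩) rfl
  obtain ⟨ψ, hψ⟩ := exists_monoidHom_extension (exists_coe_mul_zpow_eq hq) hT
    (map_eq_zpow_of_coe_eq_zpow fun g hg ↦ by rw [hTn]; exact congrArg _ (Subtype.ext hg))
  exact ⟨(Units.coeHom _).comp ψ, fun g ↦ by simp [hψ, Representation.asGroupHom_apply]⟩

/-- Let `k` be an algebraically closed field of characteristic zero, `Γ₀` a normal
subgroup of `Γ` with finite cyclic quotient `Γ/Γ₀`, and `ρ₀` an irreducible representation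
of `Γ₀` on a finite-dimensional space `V` all of whose conjugates `ρ₀ˢ` (for `s ∈ Γ`) are
isomorphic to `ρ₀`.  Then `ρ₀` extends to a representation of `Γ` on `V`. -/
theorem stmt3 {k : Type} [Field k] [IsAlgClosed k] [CharZero k]
    {Γ : Type} [Group Γ] {V : Type} [AddCommGroup V] [Module k V] [FiniteDimensional k V]
    (Γ₀ : Subgroup Γ) [Γ₀.Normal] [Finite (Γ ⧸ Γ₀)] [IsCyclic (Γ ⧸ Γ₀)]
    (ρ₀ : Representation k Γ₀ V) (hirr : RepIrreducible ρ₀)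
    (hconj : ∀ s : Γ, RepIso (conjRep Γ₀ s ρ₀) ρ₀) :
    ∃ ρext : Representation k Γ V, ∀ g : Γ₀, ρext (g : Γ) = ρ₀ g :=
  stmt3_general Γ₀ ρ₀ hirr hconj
end

section
/- Let (R, m, k) be a commutative Noetherian local ring with residue field k = R/m, and let P be a bounded cochain complex of finitely generated free R-modules. If the complex P ⊗_R k of k-vector spaces obtained by applying − ⊗_R k degreewise is exact, then P itself is exact. -/
open CategoryTheory CategoryTheory.MonoidalCategory

/-!
Descending induction on the degree shows that every module of cycles `Zⁱ = ker dⁱ` is a direct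
summand of `Pⁱ`, starting above the top of the complex where `Zⁱ = Pⁱ = 0`. Let `j = i + 1`.
If `Zʲ` is a summand, then `Zʲ ⊗ k → Pʲ ⊗ k` is split injective, so exactness of `P ⊗ k` at `j`
makes `Pⁱ ⊗ k → Zʲ ⊗ k` surjective; by Nakayama `dⁱ : Pⁱ → Zʲ` is surjective, which is
exactness of `P` at `j`. As `Zʲ` is projective, `dⁱ` then splits and `Zⁱ = ker dⁱ` is again a
summand.
-/

open IsLocalRing LinearMap
open scoped TensorProduct

section LinearAlgebra

variable {R M N L : Type*} [CommRing R] [AddCommGroup M] [Module R M] [AddCommGroup N] [Module R N]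
  [AddCommGroup L] [Module R L]

theorem LinearMap.exists_isCompl_ker_of_projective_range (f : M →ₗ[R] N)
    [Module.Projective R (range f)] : ∃ q : Submodule R M, IsCompl (ker f) q := by
  have hex : Function.Exact (ker f).subtype f.rangeRestrict := by
    rw [exact_iff, ker_rangeRestrict, Submodule.range_subtype]
  obtain ⟨π, hπ⟩ := ((hex.split_tfae Subtype.val_injective f.surjective_rangeRestrict).out 0 1).mp
    (Module.projective_lifting_property _ _ f.surjective_rangeRestrict)
  exact ⟨_, isCompl_of_proj fun x => congr($hπ x)⟩

theorem LinearMap.rTensor_injective_of_leftInverse {f : M →ₗ[R] N} {g : N →ₗ[R] M}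
    (hgf : g ∘ₗ f = LinearMap.id) (Q : Type*) [AddCommGroup Q] [Module R Q] :
    Function.Injective (f.rTensor Q) := by
  refine Function.HasLeftInverse.injective ⟨g.rTensor Q, fun x => ?_⟩
  rw [← LinearMap.comp_apply, ← rTensor_comp, hgf, rTensor_id, LinearMap.id_apply]

variable [IsLocalRing R]

theorem IsLocalRing.surjective_of_rTensor_residueField_surjective [Module.Finite R N]
    (f : M →ₗ[R] N) (hf : Function.Surjective (f.rTensor (ResidueField R))) :
    Function.Surjective f := by
  have hex := rTensor_exact (ResidueField R) f.exact_map_mkQ_range (Submodule.mkQ_surjective _)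
  have : Subsingleton ((N ⧸ range f) ⊗[R] ResidueField R) := by
    refine subsingleton_of_forall_eq 0 fun y => ?_
    obtain ⟨x, rfl⟩ := rTensor_surjective (ResidueField R) (Submodule.mkQ_surjective _) y
    obtain ⟨w, rfl⟩ := hf x
    exact hex.apply_apply_eq_zero w
  have : Subsingleton (ResidueField R ⊗[R] (N ⧸ range f)) :=
    (TensorProduct.comm R _ _).toEquiv.subsingleton
  rw [subsingleton_tensorProduct, Submodule.Quotient.subsingleton_iff] at this
  exact range_eq_top.mp this

theorem IsLocalRing.exact_of_exact_rTensor_residueField [Module.Finite R N] {f : M →ₗ[R] N}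
    {g : N →ₗ[R] L} (hgf : g ∘ₗ f = 0) {q : Submodule R N} (hq : IsCompl (ker g) q)
    (h : Function.Exact (f.rTensor (ResidueField R)) (g.rTensor (ResidueField R))) :
    Function.Exact f g := by
  have : Module.Finite R (ker g) :=
    .of_surjective _ (Submodule.projectionOnto_surjective hq)
  let f' : M →ₗ[R] ker g := f.codRestrict (ker g) fun x => congr($hgf x)
  have hincl : Function.Injective ((ker g).subtype.rTensor (ResidueField R)) :=
    rTensor_injective_of_leftInverse (Submodule.projectionOnto_comp_subtype hq) _
  have hf' : Function.Surjective f' := by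
    refine surjective_of_rTensor_residueField_surjective f' fun w => ?_
    obtain ⟨u, hu⟩ := (h ((ker g).subtype.rTensor _ w)).mp <| by
      rw [← LinearMap.comp_apply, ← rTensor_comp, comp_ker_subtype, rTensor_zero,
        LinearMap.zero_apply]
    refine ⟨u, hincl ?_⟩
    rwa [← LinearMap.comp_apply, ← rTensor_comp]
  intro y
  refine ⟨fun hy => ?_, fun ⟨x, hx⟩ => hx ▸ congr($hgf x)⟩
  obtain ⟨x, hx⟩ := hf' ⟨y, hy⟩
  exact ⟨x, congr($hx.1)⟩

end LinearAlgebra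

namespace CochainComplex

variable {R : Type*} [CommRing R]

theorem exactAt_iff_exact_d (P : CochainComplex (ModuleCat R) ℤ) {i j k : ℤ} (hij : i + 1 = j)
    (hjk : j + 1 = k) : P.ExactAt j ↔ Function.Exact (P.d i j).hom (P.d j k).hom := by
  rw [HomologicalComplex.exactAt_iff' P i j k (by simp [← hij]) (by simp [← hjk]),
    ShortComplex.moduleCat_exact_iff_range_eq_ker, exact_iff, eq_comm]
  rfl

variable [IsLocalRing R]

theorem exact_d_and_isCompl_ker_of_exactAt_rTensor (P : CochainComplex (ModuleCat R) ℤ)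
    {i j : ℤ} (hij : i + 1 = j) [Module.Projective R (P.X j)] [Module.Finite R (P.X j)]
    (hexact : (((tensorRight (ModuleCat.of R (ResidueField R))).mapHomologicalComplex
        (ComplexShape.up ℤ)).obj P).ExactAt j)
    (hker : ∃ q, IsCompl (ker (P.d j (j + 1)).hom) q) :
    Function.Exact (P.d i j).hom (P.d j (j + 1)).hom ∧ ∃ q, IsCompl (ker (P.d i j).hom) q := by
  obtain ⟨q, hq⟩ := hker
  have hd : Function.Exact (P.d i j).hom (P.d j (j + 1)).hom :=
    exact_of_exact_rTensor_residueField (congrArg ModuleCat.Hom.hom (P.d_comp_d i j (j + 1))) hq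
      ((exactAt_iff_exact_d _ hij rfl).mp hexact)
  have : Module.Projective R (ker (P.d j (j + 1)).hom) :=
    .of_split _ _ (Submodule.projectionOnto_comp_subtype hq)
  rw [exact_iff.mp hd] at this
  exact ⟨hd, exists_isCompl_ker_of_projective_range _⟩

theorem exists_isCompl_ker_d_of_exactAt_rTensor (P : CochainComplex (ModuleCat R) ℤ)
    [∀ i, Module.Projective R (P.X i)] [∀ i, Module.Finite R (P.X i)] {b : ℤ}
    (hb : ∀ i, b < i → Subsingleton (P.X i))
    (hexact : ∀ i, (((tensorRight (ModuleCat.of R (ResidueField R))).mapHomologicalComplex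
        (ComplexShape.up ℤ)).obj P).ExactAt i)
    (i : ℤ) : ∃ q, IsCompl (ker (P.d i (i + 1)).hom) q := by
  have hker_top (i : ℤ) (hi : b < i) : ∃ q, IsCompl (ker (P.d i (i + 1)).hom) q :=
    have := hb i hi
    ⟨⊥, Subsingleton.elim (ker (P.d i (i + 1)).hom) ⊤ ▸ isCompl_top_bot⟩
  by_cases hi : b < i
  · exact hker_top i hi
  refine Int.leInductionDown (motive := fun i _ => ∃ q, IsCompl (ker (P.d i (i + 1)).hom) q)
    (hker_top (b + 1) (by omega)) (fun j _ hj => ?_) i (by omega)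
  rw [sub_add_cancel]
  exact (P.exact_d_and_isCompl_ker_of_exactAt_rTensor (sub_add_cancel j 1) (hexact j) hj).2

end CochainComplex

theorem stmt6_general {R : Type} [CommRing R] [IsLocalRing R]
    (P : CochainComplex (ModuleCat R) ℤ)
    (hfree : ∀ i : ℤ, Module.Free R (P.X i))
    (hfg : ∀ i : ℤ, Module.Finite R (P.X i))
    (hbdd : ∃ a b : ℤ, ∀ i : ℤ, (i < a ∨ b < i) → Subsingleton (P.X i))
    (hexact : ∀ i : ℤ,
      (((tensorRight (ModuleCat.of R (IsLocalRing.ResidueField R))).mapHomologicalComplex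
        (ComplexShape.up ℤ)).obj P).ExactAt i) :
    ∀ i : ℤ, P.ExactAt i := by
  obtain ⟨_, b, hb⟩ := hbdd
  intro i
  rw [P.exactAt_iff_exact_d (sub_add_cancel i 1) rfl]
  exact (P.exact_d_and_isCompl_ker_of_exactAt_rTensor (sub_add_cancel i 1) (hexact i)
    (P.exists_isCompl_ker_d_of_exactAt_rTensor (fun j hj => hb j (.inr hj)) hexact i)).1

/-- Let `(R, m, k)` be a commutative Noetherian local ring with residue field `k`, and let
`P` be a bounded cochain complex of finitely generated free `R`-modules.  If the complex
`P ⊗_R k` (obtained by tensoring degreewise with the residue field) is exact, then `P`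
itself is exact. -/
theorem stmt6 {R : Type} [CommRing R] [IsNoetherianRing R] [IsLocalRing R]
    (P : CochainComplex (ModuleCat R) ℤ)
    (hfree : ∀ i : ℤ, Module.Free R (P.X i))
    (hfg : ∀ i : ℤ, Module.Finite R (P.X i))
    (hbdd : ∃ a b : ℤ, ∀ i : ℤ, (i < a ∨ b < i) → Subsingleton (P.X i))
    (hexact : ∀ i : ℤ,
      (((tensorRight (ModuleCat.of R (IsLocalRing.ResidueField R))).mapHomologicalComplex
        (ComplexShape.up ℤ)).obj P).ExactAt i) :
    ∀ i : ℤ, P.ExactAt i :=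
  stmt6_general P hfree hfg hbdd hexact
end

section
/- Weierstrass division for multivariate formal power series: let k be a field, n ≥ 1, and let f ∈ k[[x₁,…,xₙ]] be x₁-regular of order a, i.e. the one-variable power series f(x₁,0,…,0) ∈ k[[x₁]] has zero coefficients in degrees < a and nonzero coefficient in degree a. Then for every g ∈ k[[x₁,…,xₙ]] there exist unique u ∈ k[[x₁,…,xₙ]] and r₀,…,r_{a−1} ∈ k[[x₂,…,xₙ]] such that g = u·f + Σ_{i=0}^{a−1} rᵢ·x₁^i. -/
/-!
Weigh a monomial `K` by `(a + 1) · (degree of K in the variables other than xᵢ) + K i`.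
Since `f` has no monomial `xᵢ^m` with `m < a` and a unit coefficient at `xᵢ^a`, the coefficient
of `K + a·eᵢ` in `v * f` is `v_K · f_a` plus terms involving only coefficients of `v` of smaller
weight. So the quotient's coefficients are solved for by well-founded recursion on the weight,
and the same induction shows that `v = 0` as soon as `v * f` has no monomial divisible by
`xᵢ^a`. What remains, `g - u * f`, involves `xᵢ` only to powers `< a`, so it is `Σ rⱼ xᵢ^j`
for unique `rⱼ` not involving `xᵢ`.
-/

open Finsupp Finset

namespace MvPowerSeries

variable {σ R : Type*}

noncomputable def weierstrassWeight (i : σ) (a : ℕ) (K : σ →₀ ℕ) : ℕ :=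
  (a + 1) * (K.erase i).degree + K i

theorem exists_lt_eq_single_of_weierstrassWeight_le {i : σ} {a : ℕ} {K L M : σ →₀ ℕ}
    (hsum : L + M = K + single i a)
    (hle : weierstrassWeight i a K ≤ weierstrassWeight i a L)
    (hne : (L, M) ≠ (K, single i a)) :
    ∃ m < a, M = single i m := by
  have hdeg : (L.erase i).degree + (M.erase i).degree = (K.erase i).degree := by
    simpa [erase_add] using congrArg (fun J ↦ (J.erase i).degree) hsum
  have hi : L i + M i = K i + a := by simpa using congrArg (· i) hsum
  unfold weierstrassWeight at hle
  have hM : (M.erase i).degree = 0 := by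
    by_contra h
    nlinarith [Nat.one_le_iff_ne_zero.mpr h]
  have hM' : M = single i (M i) := by
    rw [← erase_add_single i M, (degree_eq_zero_iff _).mp hM, zero_add, single_eq_same]
  refine ⟨M i, lt_of_le_of_ne (by nlinarith) fun hMa ↦ hne ?_, hM'⟩
  rw [hMa] at hM'
  rw [hM', add_right_cancel (hsum.trans (congrArg (K + ·) hM'.symm))]

section Semiring

variable [Semiring R]

def NotInvolving (i : σ) (p : MvPowerSeries σ R) : Prop :=
  ∀ K : σ →₀ ℕ, K i ≠ 0 → coeff K p = 0

variable {i : σ} {a : ℕ}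

theorem coeff_mul_X_pow_of_notInvolving {s : MvPowerSeries σ R} (hs : NotInvolving i s)
    (j : ℕ) (K : σ →₀ ℕ) :
    coeff K (s * X i ^ j) = if K i = j then coeff (K.erase i) s else 0 := by
  rw [X_pow_eq, coeff_mul_monomial, mul_one]
  split_ifs with hle hj hj
  · rw [show K - single i j = K.erase i from ?_]
    ext x
    rcases eq_or_ne x i with rfl | hx
    · simp [hj]
    · simp [erase_ne hx, single_eq_of_ne hx]
  · have := single_le_iff.mp hle
    exact hs _ (by rw [tsub_apply, single_eq_same]; omega)
  · exact absurd (single_le_iff.mpr hj.ge) hle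
  · rfl

theorem coeff_sum_mul_X_pow {s : Fin a → MvPowerSeries σ R} (hs : ∀ j, NotInvolving i (s j))
    (K : σ →₀ ℕ) :
    coeff K (∑ j : Fin a, s j * X i ^ (j : ℕ)) =
      if h : K i < a then coeff (K.erase i) (s ⟨K i, h⟩) else 0 := by
  simp only [map_sum, coeff_mul_X_pow_of_notInvolving (hs _)]
  split_ifs with h
  · rw [sum_eq_single ⟨K i, h⟩ (fun j _ hj ↦ if_neg fun h' ↦ hj (Fin.ext h'.symm))
      (fun h' ↦ absurd (mem_univ _) h'), if_pos rfl]
  · exact sum_eq_zero fun j _ ↦ if_neg (by omega)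

theorem eq_zero_of_sum_mul_X_pow_eq_zero {s : Fin a → MvPowerSeries σ R}
    (hs : ∀ j, NotInvolving i (s j)) (h0 : ∑ j : Fin a, s j * X i ^ (j : ℕ) = 0) : s = 0 := by
  funext j
  ext K
  by_cases hK : K i = 0
  · simpa [coeff_sum_mul_X_pow hs, hK] using congrArg (coeff (K + single i (j : ℕ))) h0
  · exact hs j K hK

variable (i) in
noncomputable def coeffInX (j : ℕ) (h : MvPowerSeries σ R) : MvPowerSeries σ R :=
  fun K ↦ if K i = 0 then coeff (K + single i j) h else 0

theorem notInvolving_coeffInX (j : ℕ) (h : MvPowerSeries σ R) :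
    NotInvolving i (coeffInX i j h) :=
  fun _ hK ↦ if_neg hK

theorem sum_coeffInX_mul_X_pow {h : MvPowerSeries σ R} (hh : ∀ K, a ≤ K i → coeff K h = 0) :
    ∑ j : Fin a, coeffInX i j h * X i ^ (j : ℕ) = h := by
  ext K
  rw [coeff_sum_mul_X_pow fun _ ↦ notInvolving_coeffInX _ _]
  split_ifs with hK
  · exact (if_pos erase_same).trans (congrArg (coeff · h) (erase_add_single i K))
  · exact (hh K (not_lt.mp hK)).symm

section Division

variable [DecidableEq σ] {f : MvPowerSeries σ R}

theorem coeff_add_single_mul (hreg : ∀ m < a, coeff (single i m) f = 0)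
    (v : MvPowerSeries σ R) (K : σ →₀ ℕ) :
    coeff (K + single i a) (v * f) = coeff K v * coeff (single i a) f +
      ∑ p ∈ antidiagonal (K + single i a),
        if weierstrassWeight i a p.1 < weierstrassWeight i a K
        then coeff p.1 v * coeff p.2 f else 0 := by
  rw [coeff_mul, ← sum_filter_add_sum_filter_not _
    (fun p ↦ weierstrassWeight i a p.1 < weierstrassWeight i a K), sum_filter, add_comm]
  congr 1
  refine sum_eq_single_of_mem (K, single i a) (by simp) fun p hp hne ↦ ?_
  obtain ⟨hp, hle⟩ := mem_filter.mp hp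
  obtain ⟨m, hm, hM⟩ := exists_lt_eq_single_of_weierstrassWeight_le
    (mem_antidiagonal.mp hp) (not_lt.mp hle) hne
  rw [hM, hreg m hm, mul_zero]

theorem eq_zero_of_coeff_add_single_mul_eq_zero (hreg : ∀ m < a, coeff (single i m) f = 0)
    (hunit : IsUnit (coeff (single i a) f)) {v : MvPowerSeries σ R}
    (hv : ∀ K, coeff (K + single i a) (v * f) = 0) : v = 0 := by
  ext K
  induction hK : weierstrassWeight i a K using Nat.strong_induction_on generalizing K with
  | _ w ih =>
    have hsum : ∑ p ∈ antidiagonal (K + single i a),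
        (if weierstrassWeight i a p.1 < weierstrassWeight i a K
        then coeff p.1 v * coeff p.2 f else 0) = 0 :=
      sum_eq_zero fun p _ ↦ by
        split_ifs with hlt
        · rw [ih _ (hK ▸ hlt) p.1 rfl, map_zero, zero_mul]
        · rfl
    have := hv K
    rw [coeff_add_single_mul hreg, hsum, add_zero] at this
    rw [map_zero, hunit.mul_left_eq_zero.mp this]

theorem eq_zero_of_mul_add_sum_mul_X_pow_eq_zero (hreg : ∀ m < a, coeff (single i m) f = 0)
    (hunit : IsUnit (coeff (single i a) f)) {v : MvPowerSeries σ R}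
    {s : Fin a → MvPowerSeries σ R} (hs : ∀ j, NotInvolving i (s j))
    (h0 : v * f + ∑ j : Fin a, s j * X i ^ (j : ℕ) = 0) : v = 0 ∧ s = 0 := by
  have hv : v = 0 := eq_zero_of_coeff_add_single_mul_eq_zero hreg hunit fun K ↦ by
    simpa [coeff_sum_mul_X_pow hs] using congrArg (coeff (K + single i a)) h0
  rw [hv, zero_mul, zero_add] at h0
  exact ⟨hv, eq_zero_of_sum_mul_X_pow_eq_zero hs h0⟩

end Division

end Semiring

theorem NotInvolving.sub [Ring R] {i : σ} {s t : MvPowerSeries σ R} (hs : NotInvolving i s)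
    (ht : NotInvolving i t) : NotInvolving i (s - t) := fun K hK ↦ by
  rw [map_sub, hs K hK, ht K hK, sub_zero]

section CommRing

variable [CommRing R] [DecidableEq σ] {i : σ} {a : ℕ} {f : MvPowerSeries σ R}

variable (i a f) in
noncomputable def weierstrassQuotientCoeff (g : MvPowerSeries σ R) (K : σ →₀ ℕ) : R :=
  Ring.inverse (coeff (single i a) f) *
    (coeff (K + single i a) g - ∑ p ∈ antidiagonal (K + single i a),
      if weierstrassWeight i a p.1 < weierstrassWeight i a K
      then weierstrassQuotientCoeff g p.1 * coeff p.2 f else 0)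
termination_by weierstrassWeight i a K

variable (i a f) in
noncomputable def weierstrassQuotient (g : MvPowerSeries σ R) : MvPowerSeries σ R :=
  weierstrassQuotientCoeff i a f g

theorem coeff_weierstrassQuotient (g : MvPowerSeries σ R) (K : σ →₀ ℕ) :
    coeff K (weierstrassQuotient i a f g) = weierstrassQuotientCoeff i a f g K :=
  rfl

theorem coeff_add_single_weierstrassQuotient_mul (hreg : ∀ m < a, coeff (single i m) f = 0)
    (hunit : IsUnit (coeff (single i a) f)) (g : MvPowerSeries σ R) (K : σ →₀ ℕ) :
    coeff (K + single i a) (weierstrassQuotient i a f g * f) = coeff (K + single i a) g := by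
  simp only [coeff_add_single_mul hreg, coeff_weierstrassQuotient]
  rw [weierstrassQuotientCoeff, mul_right_comm, Ring.inverse_mul_cancel _ hunit, one_mul,
    sub_add_cancel]

theorem existsUnique_weierstrass_division (hreg : ∀ m < a, coeff (single i m) f = 0)
    (hunit : IsUnit (coeff (single i a) f)) (g : MvPowerSeries σ R) :
    ∃ (u : MvPowerSeries σ R) (r : Fin a → MvPowerSeries σ R),
      (∀ j, NotInvolving i (r j)) ∧ g = u * f + ∑ j : Fin a, r j * X i ^ (j : ℕ) ∧
      ∀ (u' : MvPowerSeries σ R) (r' : Fin a → MvPowerSeries σ R),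
        (∀ j, NotInvolving i (r' j)) → g = u' * f + ∑ j : Fin a, r' j * X i ^ (j : ℕ) →
        u' = u ∧ r' = r := by
  set u := weierstrassQuotient i a f g
  set r : Fin a → MvPowerSeries σ R := fun j ↦ coeffInX i j (g - u * f)
  have hr : ∀ j, NotInvolving i (r j) := fun j ↦ notInvolving_coeffInX _ _
  have hdiv : g = u * f + ∑ j : Fin a, r j * X i ^ (j : ℕ) := by
    rw [sum_coeffInX_mul_X_pow, add_sub_cancel]
    intro K hK
    rw [← tsub_add_cancel_of_le (single_le_iff.mpr hK), map_sub,
      coeff_add_single_weierstrassQuotient_mul hreg hunit, sub_self]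
  refine ⟨u, r, hr, hdiv, fun u' r' hr' hdiv' ↦ ?_⟩
  have h0 : (u' - u) * f + ∑ j : Fin a, (r' j - r j) * X i ^ (j : ℕ) = 0 := by
    simp only [sub_mul, sum_sub_distrib]
    linear_combination hdiv - hdiv'
  obtain ⟨hu, hr⟩ := eq_zero_of_mul_add_sum_mul_X_pow_eq_zero hreg hunit
    (fun j ↦ (hr' j).sub (hr j)) h0
  exact ⟨sub_eq_zero.mp hu, funext fun j ↦ sub_eq_zero.mp (congrFun hr j)⟩

end CommRing

end MvPowerSeries

/-- Weierstrass division for multivariate formal power series: if `f ∈ k[[x₁,…,xₙ]]` is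
`x₁`-regular of order `a` (the one-variable series `f(x₁,0,…,0)` vanishes to order exactly
`a`), then every `g` can be written uniquely as `g = u·f + Σ_{i<a} rᵢ·x₁^i` with the `rᵢ`
power series not involving `x₁`. -/
theorem stmt12 {k : Type*} [Field k] (n : ℕ) (hn : 0 < n) (a : ℕ)
    (f : MvPowerSeries (Fin n) k)
    (hreg₁ : ∀ m : ℕ, m < a → MvPowerSeries.coeff (Finsupp.single ⟨0, hn⟩ m) f = 0)
    (hreg₂ : MvPowerSeries.coeff (Finsupp.single ⟨0, hn⟩ a) f ≠ 0)
    (g : MvPowerSeries (Fin n) k) :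
    ∃ (u : MvPowerSeries (Fin n) k) (r : Fin a → MvPowerSeries (Fin n) k),
      (∀ i, ∀ K : Fin n →₀ ℕ, K ⟨0, hn⟩ ≠ 0 → MvPowerSeries.coeff K (r i) = 0) ∧
      g = u * f + ∑ i : Fin a, r i * (MvPowerSeries.X ⟨0, hn⟩) ^ (i : ℕ) ∧
      ∀ (u' : MvPowerSeries (Fin n) k) (r' : Fin a → MvPowerSeries (Fin n) k),
        (∀ i, ∀ K : Fin n →₀ ℕ, K ⟨0, hn⟩ ≠ 0 → MvPowerSeries.coeff K (r' i) = 0) →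
        g = u' * f + ∑ i : Fin a, r' i * (MvPowerSeries.X ⟨0, hn⟩) ^ (i : ℕ) →
        u' = u ∧ r' = r :=
  MvPowerSeries.existsUnique_weierstrass_division hreg₁ hreg₂.isUnit g
end

section
/- Weierstrass preparation for multivariate formal power series: let k be a field, n ≥ 1, and let f ∈ k[[x₁,…,xₙ]] be x₁-regular of order a, i.e. f(x₁,0,…,0) ∈ k[[x₁]] has zero coefficients in degrees < a and nonzero coefficient in degree a. Then there exist a unique unit u of k[[x₁,…,xₙ]] and unique c₀,…,c_{a−1} ∈ k[[x₂,…,xₙ]], each with zero constant coefficient, such that f = u · (x₁^a + Σ_{i=0}^{a−1} cᵢ·x₁^i). -/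
/-!
Write `A = k[[x₂,…,xₙ]]`, so that `k[[x₁,…,xₙ]] ≅ A[[x₁]]` via `MvPowerSeries.finSuccEquiv`.
The ring `A` is a complete local ring with maximal ideal `(x₂,…,xₙ)` and residue field `k`,
and `x₁`-regularity of order `a` says exactly that the reduction of `f` to `k[[x₁]]` has
order `a`. Mathlib's Weierstrass preparation theorem over complete local rings then writes
`f = P · h` uniquely, with `h` a unit and `P` a distinguished polynomial of degree `a`, i.e.
`P = x₁^a + Σ cᵢ x₁^i` with `cᵢ ∈ (x₂,…,xₙ)`.
-/

namespace Polynomial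

variable {A : Type*} [CommRing A] {a : ℕ}

theorem coeff_X_pow_add_sum (d : Fin a → A) (i : Fin a) :
    (X ^ a + ∑ i : Fin a, C (d i) * X ^ (i : ℕ)).coeff i = d i := by
  rw [coeff_add, coeff_X_pow, if_neg i.2.ne, zero_add, finsetSum_coeff]
  simp [Fin.val_inj]

theorem isDistinguishedAt_X_pow_add_sum [Nontrivial A] {I : Ideal A} {d : Fin a → A}
    (hd : ∀ i, d i ∈ I) : (X ^ a + ∑ i : Fin a, C (d i) * X ^ (i : ℕ)).IsDistinguishedAt I := by
  have hdeg := degree_sum_fin_lt d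
  have hnat : (X ^ a + ∑ i : Fin a, C (d i) * X ^ (i : ℕ)).natDegree = a := by
    rw [natDegree_add_eq_left_of_degree_lt (by simpa using hdeg), natDegree_X_pow]
  refine ⟨⟨fun {j} hj => ?_⟩, monic_X_pow_add hdeg⟩
  rw [hnat] at hj
  exact coeff_X_pow_add_sum d ⟨j, hj⟩ ▸ hd ⟨j, hj⟩

theorem IsDistinguishedAt.exists_eq_X_pow_add_sum {I : Ideal A} {P : A[X]}
    (hP : P.IsDistinguishedAt I) (ha : P.natDegree = a) :
    ∃ d : Fin a → A, (∀ i, d i ∈ I) ∧ P = X ^ a + ∑ i : Fin a, C (d i) * X ^ (i : ℕ) := by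
  subst ha
  refine ⟨fun i => P.coeff i, fun i => hP.mem i.2, ?_⟩
  rw [Fin.sum_univ_eq_sum_range (fun i => C (P.coeff i) * X ^ i)]
  exact hP.monic.as_sum

end Polynomial

namespace MvPowerSeries

section MaximalIdeal

variable {σ : Type*}

theorem mem_span_range_X_of_constantCoeff_eq_zero {R : Type*} [CommSemiring R] [Finite σ]
    {p : MvPowerSeries σ R} (hp : constantCoeff p = 0) :
    p ∈ Ideal.span (Set.range X) := by
  classical
  have := Fintype.ofFinite σ
  let _ : LinearOrder σ := LinearOrder.lift' _ (Fintype.equivFin σ).injective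
  let part (i : σ) : MvPowerSeries σ R := fun e => if e.support.min = i then coeff e p else 0
  have coeff_part (i : σ) (e : σ →₀ ℕ) :
      coeff e (part i) = if e.support.min = i then coeff e p else 0 := rfl
  have hsum : p = ∑ i, part i := by
    ext e
    rw [map_sum]
    by_cases he : e = 0
    · subst he
      simp [coeff_part, hp]
    · obtain ⟨i, hi⟩ := Finset.min_of_nonempty (Finsupp.support_nonempty_iff.mpr he)
      rw [Finset.sum_eq_single i]
      · simp [coeff_part, hi]
      · intro j _ hj
        simp [coeff_part, hi, Ne.symm hj]
      · simp
  rw [hsum]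
  refine Ideal.sum_mem _ fun i _ => ?_
  obtain ⟨q, hq⟩ : X i ∣ part i := X_dvd_iff.mpr fun e he => by
    have : e.support.min ≠ i := fun h => Finsupp.mem_support_iff.mp (Finset.mem_of_min h) he
    simp [coeff_part, this]
  exact hq ▸ Ideal.mul_mem_right _ _ (Ideal.subset_span ⟨i, rfl⟩)

variable {k : Type*} [Field k]

theorem mem_maximalIdeal_iff_constantCoeff_eq_zero {p : MvPowerSeries σ k} :
    p ∈ IsLocalRing.maximalIdeal (MvPowerSeries σ k) ↔ constantCoeff p = 0 := by
  rw [IsLocalRing.mem_maximalIdeal, mem_nonunits_iff, isUnit_iff_constantCoeff,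
    isUnit_iff_ne_zero, not_not]

theorem maximalIdeal_eq_span_range_X [Finite σ] :
    IsLocalRing.maximalIdeal (MvPowerSeries σ k) = Ideal.span (Set.range X) := by
  refine le_antisymm (fun p hp => mem_span_range_X_of_constantCoeff_eq_zero
    (mem_maximalIdeal_iff_constantCoeff_eq_zero.mp hp)) (Ideal.span_le.mpr ?_)
  rintro _ ⟨i, rfl⟩
  exact mem_maximalIdeal_iff_constantCoeff_eq_zero.mpr (constantCoeff_X i)

instance [Finite σ] :
    IsAdicComplete (IsLocalRing.maximalIdeal (MvPowerSeries σ k)) (MvPowerSeries σ k) := by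
  rw [maximalIdeal_eq_span_range_X]
  infer_instance

end MaximalIdeal

section FinSuccEquiv

variable {R : Type*} [CommRing R] {m a : ℕ}

theorem constantCoeff_coeff_finSuccEquiv (p : MvPowerSeries (Fin (m + 1)) R) (i : ℕ) :
    constantCoeff (PowerSeries.coeff i (finSuccEquiv R m p)) = coeff (Finsupp.single 0 i) p := by
  rw [← coeff_zero_eq_constantCoeff_apply, coeff_coeff_finSuccEquiv,
    Finsupp.cons_zero_eq_single_zero]

theorem constantCoeff_finSuccEquiv_symm_C (b : MvPowerSeries (Fin m) R) :
    constantCoeff ((finSuccEquiv R m).symm (PowerSeries.C b)) = constantCoeff b := by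
  simpa using (constantCoeff_coeff_finSuccEquiv ((finSuccEquiv R m).symm (PowerSeries.C b)) 0).symm

theorem exists_finSuccEquiv_eq_C_iff {p : MvPowerSeries (Fin (m + 1)) R} :
    (∃ b, finSuccEquiv R m p = PowerSeries.C b) ↔
      ∀ K : Fin (m + 1) →₀ ℕ, K 0 ≠ 0 → coeff K p = 0 := by
  constructor
  · rintro ⟨b, hb⟩ K hK
    rw [← Finsupp.cons_tail K, ← coeff_coeff_finSuccEquiv, hb, PowerSeries.coeff_C,
      if_neg hK, map_zero]
  · intro hp
    refine ⟨PowerSeries.coeff 0 (finSuccEquiv R m p), PowerSeries.ext fun i => ?_⟩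
    rw [PowerSeries.coeff_C]
    split_ifs with hi
    · rw [hi]
    · ext x
      rw [coeff_coeff_finSuccEquiv, hp _ (by simpa using hi), map_zero]

theorem finSuccEquiv_X_pow_add_sum (d : Fin a → MvPowerSeries (Fin m) R) :
    finSuccEquiv R m
        (X 0 ^ a + ∑ i : Fin a, (finSuccEquiv R m).symm (PowerSeries.C (d i)) * X 0 ^ (i : ℕ)) =
      ((Polynomial.X ^ a + ∑ i : Fin a, Polynomial.C (d i) * Polynomial.X ^ (i : ℕ) :
        Polynomial (MvPowerSeries (Fin m) R)) : PowerSeries (MvPowerSeries (Fin m) R)) := by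
  simp only [map_add, map_pow, map_sum, map_mul, finSuccEquiv_X_zero, AlgEquiv.apply_symm_apply]
  rw [← Polynomial.coeToPowerSeries.ringHom_apply, map_add, map_sum]
  simp

variable {k : Type*} [Field k]

theorem order_map_residue_finSuccEquiv {f : MvPowerSeries (Fin (m + 1)) k}
    (hreg₁ : ∀ j < a, coeff (Finsupp.single 0 j) f = 0)
    (hreg₂ : coeff (Finsupp.single 0 a) f ≠ 0) :
    ((finSuccEquiv k m f).map (IsLocalRing.residue _)).order = a := by
  have residue_coeff (j : ℕ) :
      IsLocalRing.residue _ (PowerSeries.coeff j (finSuccEquiv k m f)) = 0 ↔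
        coeff (Finsupp.single 0 j) f = 0 := by
    rw [IsLocalRing.residue_eq_zero_iff, mem_maximalIdeal_iff_constantCoeff_eq_zero,
      constantCoeff_coeff_finSuccEquiv]
  rw [PowerSeries.order_eq_nat]
  simp only [PowerSeries.coeff_map, ne_eq, residue_coeff]
  exact ⟨hreg₂, hreg₁⟩

theorem isWeierstrassFactorization_finSuccEquiv {f u : MvPowerSeries (Fin (m + 1)) k}
    {d : Fin a → MvPowerSeries (Fin m) k} (hu : IsUnit u) (hd : ∀ i, constantCoeff (d i) = 0)
    (hf : f = u * (X 0 ^ a +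
      ∑ i : Fin a, (finSuccEquiv k m).symm (PowerSeries.C (d i)) * X 0 ^ (i : ℕ))) :
    (finSuccEquiv k m f).IsWeierstrassFactorization
      (Polynomial.X ^ a + ∑ i : Fin a, Polynomial.C (d i) * Polynomial.X ^ (i : ℕ))
      (finSuccEquiv k m u) :=
  ⟨Polynomial.isDistinguishedAt_X_pow_add_sum fun i =>
      mem_maximalIdeal_iff_constantCoeff_eq_zero.mpr (hd i),
    hu.map _, by rw [hf, map_mul, finSuccEquiv_X_pow_add_sum, mul_comm]⟩

theorem weierstrass_preparation (f : MvPowerSeries (Fin (m + 1)) k)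
    (hreg₁ : ∀ j < a, coeff (Finsupp.single 0 j) f = 0)
    (hreg₂ : coeff (Finsupp.single 0 a) f ≠ 0) :
    ∃ (u : MvPowerSeries (Fin (m + 1)) k) (c : Fin a → MvPowerSeries (Fin (m + 1)) k),
      IsUnit u ∧
      (∀ i, ∀ K : Fin (m + 1) →₀ ℕ, K 0 ≠ 0 → coeff K (c i) = 0) ∧
      (∀ i, constantCoeff (c i) = 0) ∧
      f = u * (X 0 ^ a + ∑ i : Fin a, c i * X 0 ^ (i : ℕ)) ∧
      ∀ (u' : MvPowerSeries (Fin (m + 1)) k) (c' : Fin a → MvPowerSeries (Fin (m + 1)) k),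
        IsUnit u' →
        (∀ i, ∀ K : Fin (m + 1) →₀ ℕ, K 0 ≠ 0 → coeff K (c' i) = 0) →
        (∀ i, constantCoeff (c' i) = 0) →
        f = u' * (X 0 ^ a + ∑ i : Fin a, c' i * X 0 ^ (i : ℕ)) →
        u' = u ∧ c' = c := by
  set φ := finSuccEquiv k m
  have horder := order_map_residue_finSuccEquiv hreg₁ hreg₂
  obtain ⟨P, h, H⟩ := PowerSeries.exists_isWeierstrassFactorization (g := φ f)
    (PowerSeries.order_finite_iff_ne_zero.mp (horder ▸ ENat.natCast_lt_top a))
  obtain ⟨d, hd, rfl⟩ := H.isDistinguishedAt.exists_eq_X_pow_add_sum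
    (by rw [H.natDegree_eq_toNat_order_map, horder, ENat.toNat_natCast])
  refine ⟨φ.symm h, fun i => φ.symm (PowerSeries.C (d i)), H.isUnit.map _,
    fun i => exists_finSuccEquiv_eq_C_iff.mp ⟨d i, by simp [φ]⟩, fun i => ?_, φ.injective ?_, ?_⟩
  · rw [constantCoeff_finSuccEquiv_symm_C, ← mem_maximalIdeal_iff_constantCoeff_eq_zero]
    exact hd i
  · rw [map_mul, finSuccEquiv_X_pow_add_sum, AlgEquiv.apply_symm_apply, H.eq_mul, mul_comm]
  · intro u' c' hu' hc' hc'₀ hf'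
    choose d' hd' using fun i => exists_finSuccEquiv_eq_C_iff.mpr (hc' i)
    obtain rfl : c' = fun i => φ.symm (PowerSeries.C (d' i)) := by
      funext i
      rw [← hd', AlgEquiv.symm_apply_apply]
    have H' := isWeierstrassFactorization_finSuccEquiv hu'
      (fun i => constantCoeff_finSuccEquiv_symm_C (d' i) ▸ hc'₀ i) hf'
    obtain ⟨hP, hu⟩ := H'.elim H
    refine ⟨by rw [← hu, AlgEquiv.symm_apply_apply], funext fun i => ?_⟩
    have hcoeff := congrArg (Polynomial.coeff · i) hP
    simp only [Polynomial.coeff_X_pow_add_sum] at hcoeff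
    rw [hcoeff]

end FinSuccEquiv

end MvPowerSeries

/-- Weierstrass preparation for multivariate formal power series: if `f ∈ k[[x₁,…,xₙ]]` is
`x₁`-regular of order `a`, then `f = u · (x₁^a + Σ_{i<a} cᵢ·x₁^i)` for a unique unit `u`
and unique power series `cᵢ` not involving `x₁` and with zero constant coefficient. -/
theorem stmt13 {k : Type*} [Field k] (n : ℕ) (hn : 0 < n) (a : ℕ)
    (f : MvPowerSeries (Fin n) k)
    (hreg₁ : ∀ m : ℕ, m < a → MvPowerSeries.coeff (Finsupp.single ⟨0, hn⟩ m) f = 0)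
    (hreg₂ : MvPowerSeries.coeff (Finsupp.single ⟨0, hn⟩ a) f ≠ 0) :
    ∃ (u : MvPowerSeries (Fin n) k) (c : Fin a → MvPowerSeries (Fin n) k),
      IsUnit u ∧
      (∀ i, ∀ K : Fin n →₀ ℕ, K ⟨0, hn⟩ ≠ 0 → MvPowerSeries.coeff K (c i) = 0) ∧
      (∀ i, MvPowerSeries.constantCoeff (c i) = 0) ∧
      f = u * ((MvPowerSeries.X ⟨0, hn⟩) ^ a
          + ∑ i : Fin a, c i * (MvPowerSeries.X ⟨0, hn⟩) ^ (i : ℕ)) ∧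
      ∀ (u' : MvPowerSeries (Fin n) k) (c' : Fin a → MvPowerSeries (Fin n) k),
        IsUnit u' →
        (∀ i, ∀ K : Fin n →₀ ℕ, K ⟨0, hn⟩ ≠ 0 → MvPowerSeries.coeff K (c' i) = 0) →
        (∀ i, MvPowerSeries.constantCoeff (c' i) = 0) →
        f = u' * ((MvPowerSeries.X ⟨0, hn⟩) ^ a
            + ∑ i : Fin a, c' i * (MvPowerSeries.X ⟨0, hn⟩) ^ (i : ℕ)) →
        u' = u ∧ c' = c := by
  obtain ⟨m, rfl⟩ := Nat.exists_eq_add_one_of_ne_zero hn.ne'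
  exact MvPowerSeries.weierstrass_preparation f hreg₁ hreg₂
end

section
/- Let k be a field, n ≥ 1, a ≥ 1, and let p = x₁^a + Σ_{i=0}^{a−1} cᵢ(x₂,…,xₙ)·x₁^i ∈ k[[x₁,…,xₙ]], where c₀,…,c_{a−1} ∈ k[[x₂,…,xₙ]] and c₀ has zero constant coefficient. Let S ⊆ k[[x₁,…,xₙ]] be the image of the continuous k-algebra substitution homomorphism k[[y₁,…,yₙ]] → k[[x₁,…,xₙ]] sending y₁ ↦ p and yⱼ ↦ xⱼ for j ≥ 2. Then k[[x₁,…,xₙ]] is generated as an S-module by 1, x₁, …, x₁^{a−1}; in particular k[[x₁,…,xₙ]] is a finite ring extension of its subring S. -/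
/-- The "slice" of `h ∈ k[[x₁,…,xₙ]]` along powers of the variable `x1`: writing
`h = Σ_m hₘ·x1^m` with `hₘ` not involving `x1`, `sliceAt x1 h m` is the series `hₘ`. -/
noncomputable def sliceAt {k : Type*} [Semiring k] {n : ℕ} (x1 : Fin n)
    (h : MvPowerSeries (Fin n) k) (m : ℕ) : MvPowerSeries (Fin n) k :=
  fun K => if K x1 = 0 then MvPowerSeries.coeff (K + Finsupp.single x1 m) h else 0

/-- Substitution of the power series `p` for the variable `x1` in `h`, all other variables
being kept fixed: in the notation above, `substAtX x1 p h = Σ_m hₘ·p^m`.  This is the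
value at `h` of the continuous `k`-algebra substitution homomorphism
`k[[y₁,…,yₙ]] → k[[x₁,…,xₙ]]`, `y₁ ↦ p`, `yⱼ ↦ xⱼ (j ≥ 2)`, provided `p` has zero constant
coefficient (so that only the finitely many terms with `m ≤ |K|` contribute to the
coefficient of a given monomial `x^K`). -/
noncomputable def substAtX {k : Type*} [CommSemiring k] {n : ℕ} (x1 : Fin n)
    (p : MvPowerSeries (Fin n) k) (h : MvPowerSeries (Fin n) k) : MvPowerSeries (Fin n) k :=
  fun K => ∑ m ∈ Finset.range (K.sum (fun _ e => e) + 1),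
    MvPowerSeries.coeff K (sliceAt x1 h m * p ^ m)

/-!
Let `b ≤ a` be the order of `p(x₁, 0, …, 0)`, positive because `c₀(0) = 0`, and give `x₁`
weight `1` and the other variables weight `a + 1`. Then `p` agrees with `u x₁^b` (`u ≠ 0`) in every
monomial of weight `≤ b`, hence `p^m` agrees with `u^m x₁^(bm)` up to weight `bm`. Write the
exponent of `x₁` in a series `v` as `bm + i` with `i < b`, and let `hᵢ` collect the monomials
`x'^A x₁^(bm+i)` of `v` as `x'^A y^m`. The additive map `v ↦ Σ_{i<b} hᵢ(p, x₂, …, xₙ) x₁^i` is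
then triangular with respect to the weight, with diagonal entries `u^m`, so it is surjective:
already `1, x₁, …, x₁^(b-1)` generate.
-/

open MvPowerSeries Finsupp

section InitialTerm

variable {σ R : Type*} [CommSemiring R] (ω : σ → ℕ)

def HasInitialTerm (f : MvPowerSeries σ R) (E : σ →₀ ℕ) (c : R) : Prop :=
  ∀ K, weight ω K ≤ weight ω E → coeff K f = coeff K (monomial E c)

variable {ω}

theorem HasInitialTerm.mul {f g : MvPowerSeries σ R} {E F : σ →₀ ℕ} {c d : R}
    (hf : HasInitialTerm ω f E c) (hg : HasInitialTerm ω g F d) :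
    HasInitialTerm ω (f * g) (E + F) (c * d) := by
  classical
  intro K hK
  rw [← monomial_mul_monomial, coeff_mul, coeff_mul]
  refine Finset.sum_congr rfl fun ⟨A, B⟩ hAB => ?_
  simp only [Finset.HasAntidiagonal.mem_antidiagonal] at hAB
  have hw : weight ω A + weight ω B ≤ weight ω E + weight ω F := by
    rw [← map_add, hAB, ← map_add]; exact hK
  rcases le_or_gt (weight ω A) (weight ω E) with hA | hA
  · rw [hf A hA]
    by_cases hAE : A = E
    · rw [hg B (by rw [hAE] at hw; omega)]
    · simp [coeff_monomial, hAE]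
  · rw [hg B (by omega)]
    by_cases hBF : B = F
    · rw [hf A (by rw [hBF] at hw; omega)]
    · simp [coeff_monomial, hBF]

theorem HasInitialTerm.pow {f : MvPowerSeries σ R} {E : σ →₀ ℕ} {c : R}
    (hf : HasInitialTerm ω f E c) (m : ℕ) : HasInitialTerm ω (f ^ m) (m • E) (c ^ m) := by
  induction m with
  | zero => intro K _; simp
  | succ m ih => simpa only [pow_succ, succ_nsmul] using ih.mul hf

theorem HasInitialTerm.coeff_mul_of_coeff_eq_zero {f g : MvPowerSeries σ R} {E K : σ →₀ ℕ}
    {c : R} (hf : HasInitialTerm ω f E c)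
    (hg : ∀ A, weight ω A + weight ω E < weight ω K → coeff A g = 0) :
    coeff K (g * f) = if E ≤ K then coeff (K - E) g * c else 0 := by
  classical
  rw [← coeff_mul_monomial, coeff_mul, coeff_mul]
  refine Finset.sum_congr rfl fun ⟨A, B⟩ hAB => ?_
  simp only [Finset.HasAntidiagonal.mem_antidiagonal] at hAB
  rcases le_or_gt (weight ω B) (weight ω E) with hB | hB
  · rw [hf B hB]
  · have hBE : B ≠ E := by rintro rfl; omega
    rw [hg A (by rw [← hAB, map_add]; omega)]
    simp [coeff_monomial, hBE]

end InitialTerm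

section Triangular

variable {σ k : Type*} [DivisionRing k] (w : (σ →₀ ℕ) → ℕ) (d : (σ →₀ ℕ) → k)
  (T : MvPowerSeries σ k →+ MvPowerSeries σ k)

noncomputable def triangularSolve (g : MvPowerSeries σ k) (K : σ →₀ ℕ) : k :=
  (d K)⁻¹ * (coeff K g - coeff K (T fun K' => if w K' < w K then triangularSolve g K' else 0))
termination_by w K

theorem surjective_of_triangular (hd : ∀ K, d K ≠ 0)
    (hT : ∀ v K, (∀ K', w K' < w K → coeff K' v = 0) → coeff K (T v) = d K * coeff K v) :
    Function.Surjective T := by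
  intro g
  let s : MvPowerSeries σ k := triangularSolve w d T g
  refine ⟨s, ext fun K => ?_⟩
  let lower : MvPowerSeries σ k := fun K' => if w K' < w K then s K' else 0
  have hlower : ∀ K', coeff K' lower = if w K' < w K then coeff K' s else 0 := fun _ => rfl
  have hs : coeff K s = (d K)⁻¹ * (coeff K g - coeff K (T lower)) := by
    show triangularSolve w d T g K = _
    rw [triangularSolve]
  have hdiff : coeff K (T (s - lower)) = d K * coeff K s := by
    rw [hT _ K fun K' hK' => by rw [map_sub, hlower, if_pos hK', sub_self], map_sub, hlower,
      if_neg (lt_irrefl _), sub_zero]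
  calc coeff K (T s) = coeff K (T lower) + coeff K (T (s - lower)) := by
        rw [← map_add, ← map_add, add_sub_cancel]
    _ = coeff K g := by rw [hdiff, hs, mul_inv_cancel_left₀ (hd K)]; abel

end Triangular

section Substitution

variable {k : Type*} [CommSemiring k] {n : ℕ} (x1 : Fin n)

theorem coeff_sliceAt (h : MvPowerSeries (Fin n) k) (m : ℕ) (A : Fin n →₀ ℕ) :
    coeff A (sliceAt x1 h m) = if A x1 = 0 then coeff (A + single x1 m) h else 0 := rfl

theorem sliceAt_add (h h' : MvPowerSeries (Fin n) k) (m : ℕ) :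
    sliceAt x1 (h + h') m = sliceAt x1 h m + sliceAt x1 h' m := by
  ext A
  simp only [coeff_sliceAt, map_add]
  split_ifs <;> simp

theorem substAtX_add (p h h' : MvPowerSeries (Fin n) k) :
    substAtX x1 p (h + h') = substAtX x1 p h + substAtX x1 p h' := by
  ext K
  simp only [map_add, coeff_apply, substAtX, sliceAt_add, add_mul, ← Finset.sum_add_distrib]

theorem substAtX_zero (p : MvPowerSeries (Fin n) k) : substAtX x1 p 0 = 0 := by
  ext K
  have : ∀ m, sliceAt x1 (0 : MvPowerSeries (Fin n) k) m = 0 := fun m => by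
    ext A; simp [coeff_sliceAt]
  simp only [coeff_apply, substAtX, this, zero_mul, map_zero, Finset.sum_const_zero]

/-- Reading the exponent of `x1` in `digit x1 b i v` as that of a new variable `y`, the
coefficient of `x'^A y^m` is that of `x'^A x1^(m b + i)` in `v`; thus
`v = Σ_{i<b} (digit x1 b i v)(y := x1^b) x1^i`. -/
noncomputable def digit (b i : ℕ) (v : MvPowerSeries (Fin n) k) : MvPowerSeries (Fin n) k :=
  fun L => coeff (L.erase x1 + single x1 (L x1 * b + i)) v

theorem coeff_sliceAt_digit (b i : ℕ) (v : MvPowerSeries (Fin n) k) (m : ℕ) (A : Fin n →₀ ℕ) :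
    coeff A (sliceAt x1 (digit x1 b i v) m)
      = if A x1 = 0 then coeff (A + single x1 (m * b + i)) v else 0 := by
  rw [coeff_sliceAt]
  split_ifs with hA
  · have hAe : (A + single x1 m).erase x1 = A := by
      rw [erase_add, erase_single, add_zero, erase_of_notMem_support (by simpa using hA)]
    show coeff _ v = _
    simp [hAe, hA]
  · rfl

theorem digit_zero (b i : ℕ) : digit x1 b i (0 : MvPowerSeries (Fin n) k) = 0 := by
  ext L
  simp only [coeff_apply, digit, map_zero]

theorem digit_add (b i : ℕ) (v v' : MvPowerSeries (Fin n) k) :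
    digit x1 b i (v + v') = digit x1 b i v + digit x1 b i v' := by
  ext L
  simp only [coeff_apply, digit, map_add]

variable {x1} {ω : Fin n → ℕ} {p : MvPowerSeries (Fin n) k} {b : ℕ} {u : k}

theorem coeff_sliceAt_digit_mul_pow (hp : HasInitialTerm ω p (single x1 b) u)
    (v : MvPowerSeries (Fin n) k) (i m : ℕ) (K : Fin n →₀ ℕ)
    (hv : ∀ A, weight ω A < weight ω (K + single x1 i) → coeff A v = 0) :
    coeff K (sliceAt x1 (digit x1 b i v) m * p ^ m)
      = if K x1 = m * b then coeff (K + single x1 i) v * u ^ m else 0 := by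
  have hpm : HasInitialTerm ω (p ^ m) (single x1 (m * b)) (u ^ m) := by
    simpa [smul_single] using hp.pow m
  rw [hpm.coeff_mul_of_coeff_eq_zero fun A hA => ?_]
  · simp only [single_le_iff, coeff_sliceAt_digit, tsub_apply, single_eq_same]
    by_cases hK : K x1 = m * b
    · have hshift : K - single x1 (m * b) + single x1 (m * b + i) = K + single x1 i := by
        ext j
        by_cases hj : j = x1
        · subst hj
          simp only [Finsupp.add_apply, tsub_apply, single_eq_same, hK, Nat.sub_self, zero_add]
        · simp [Ne.symm hj]
      rw [if_pos hK.ge, if_pos (by omega), if_pos hK, hshift]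
    · rw [if_neg hK]
      split_ifs with hle hsub
      · omega
      · exact zero_mul _
      · rfl
  · rw [coeff_sliceAt_digit]
    split_ifs
    · apply hv
      simp only [map_add, weight_single, smul_eq_mul, add_mul] at hA ⊢
      omega
    · rfl

theorem coeff_substAtX_digit (hb : 0 < b) (hp : HasInitialTerm ω p (single x1 b) u)
    (v : MvPowerSeries (Fin n) k) (i : ℕ) (K : Fin n →₀ ℕ)
    (hv : ∀ A, weight ω A < weight ω (K + single x1 i) → coeff A v = 0) :
    coeff K (substAtX x1 p (digit x1 b i v))
      = if b ∣ K x1 then coeff (K + single x1 i) v * u ^ (K x1 / b) else 0 := by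
  rw [coeff_apply]
  simp only [substAtX, coeff_sliceAt_digit_mul_pow hp v i _ K hv]
  split_ifs with hdvd
  · obtain ⟨q, hq⟩ := hdvd
    have hqdeg : q < K.sum (fun _ e => e) + 1 :=
      Nat.lt_succ_of_le ((Nat.le_mul_of_pos_left q hb).trans (hq ▸ le_degree x1 K))
    rw [Finset.sum_eq_single_of_mem q (Finset.mem_range.mpr hqdeg), if_pos (by rw [hq, mul_comm]),
      hq, Nat.mul_div_cancel_left q hb]
    refine fun m _ hmq => if_neg fun h => hmq ?_
    rw [hq] at h
    exact (Nat.eq_of_mul_eq_mul_left hb (h.trans (mul_comm m b))).symm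
  · refine Finset.sum_eq_zero fun m _ => if_neg fun h => hdvd ⟨m, by rw [h, mul_comm]⟩

theorem coeff_substAtX_digit_mul_X_pow (hb : 0 < b) (hp : HasInitialTerm ω p (single x1 b) u)
    (v : MvPowerSeries (Fin n) k) {i : ℕ} (hi : i < b) (K : Fin n →₀ ℕ)
    (hv : ∀ A, weight ω A < weight ω K → coeff A v = 0) :
    coeff K (substAtX x1 p (digit x1 b i v) * X x1 ^ i)
      = if i = K x1 % b then coeff K v * u ^ (K x1 / b) else 0 := by
  rw [X_pow_eq, coeff_mul_monomial, mul_one]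
  simp only [single_le_iff]
  by_cases hiK : i ≤ K x1
  swap
  · rw [if_neg hiK, if_neg fun h : i = K x1 % b => hiK (h ▸ Nat.mod_le _ _)]
  have hK : K - single x1 i + single x1 i = K := tsub_add_cancel_of_le (single_le_iff.mpr hiK)
  rw [if_pos hiK, coeff_substAtX_digit hb hp v i _ (by rwa [hK]), hK, tsub_apply, single_eq_same]
  have hdvd : b ∣ K x1 - i ↔ i = K x1 % b := by
    rw [← Nat.modEq_iff_dvd' hiK, Nat.ModEq, Nat.mod_eq_of_lt hi]
  by_cases hmod : i = K x1 % b
  · have hdiv := Nat.div_add_mod (K x1) b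
    rw [if_pos (hdvd.mpr hmod), if_pos hmod, show K x1 - i = b * (K x1 / b) by omega,
      Nat.mul_div_cancel_left _ hb]
  · rw [if_neg (hdvd.not.mpr hmod), if_neg hmod]

variable (x1 p b) in
noncomputable def digitExpansion : MvPowerSeries (Fin n) k →+ MvPowerSeries (Fin n) k where
  toFun v := ∑ i : Fin b, substAtX x1 p (digit x1 b i v) * X x1 ^ (i : ℕ)
  map_zero' := by simp only [digit_zero, substAtX_zero, zero_mul, Finset.sum_const_zero]
  map_add' v v' := by simp only [digit_add, substAtX_add, add_mul, Finset.sum_add_distrib]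

theorem coeff_digitExpansion (hb : 0 < b) (hp : HasInitialTerm ω p (single x1 b) u)
    (v : MvPowerSeries (Fin n) k) (K : Fin n →₀ ℕ)
    (hv : ∀ A, weight ω A < weight ω K → coeff A v = 0) :
    coeff K (digitExpansion x1 p b v) = u ^ (K x1 / b) * coeff K v := by
  simp only [digitExpansion, AddMonoidHom.coe_mk, ZeroHom.coe_mk, map_sum,
    coeff_substAtX_digit_mul_X_pow hb hp v (Fin.isLt _) K hv]
  rw [Finset.sum_eq_single_of_mem ⟨K x1 % b, Nat.mod_lt _ hb⟩ (Finset.mem_univ _), if_pos rfl,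
    mul_comm]
  exact fun i _ hi => if_neg fun h => hi (Fin.ext h)

end Substitution

section Generation

variable {k : Type*} [Field k] {n : ℕ} {x1 : Fin n} {ω : Fin n → ℕ} {p : MvPowerSeries (Fin n) k}
  {b : ℕ} {u : k}

theorem exists_eq_sum_substAtX_mul_X_pow (hb : 0 < b) (hp : HasInitialTerm ω p (single x1 b) u)
    (hu : u ≠ 0) (g : MvPowerSeries (Fin n) k) :
    ∃ h : Fin b → MvPowerSeries (Fin n) k,
      g = ∑ i : Fin b, substAtX x1 p (h i) * X x1 ^ (i : ℕ) := by
  obtain ⟨v, hv⟩ := surjective_of_triangular (weight ω) (fun K => u ^ (K x1 / b))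
    (digitExpansion x1 p b) (fun _ => pow_ne_zero _ hu)
    (fun v K hvK => coeff_digitExpansion hb hp v K hvK) g
  exact ⟨fun i => digit x1 b i v, hv.symm⟩

theorem exists_eq_sum_substAtX_mul_X_pow_of_le {a : ℕ} (hb : 0 < b) (hba : b ≤ a)
    (hp : HasInitialTerm ω p (single x1 b) u) (hu : u ≠ 0) (g : MvPowerSeries (Fin n) k) :
    ∃ h : Fin a → MvPowerSeries (Fin n) k,
      g = ∑ i : Fin a, substAtX x1 p (h i) * X x1 ^ (i : ℕ) := by
  obtain ⟨h, rfl⟩ := exists_eq_sum_substAtX_mul_X_pow hb hp hu g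
  let F : ℕ → MvPowerSeries (Fin n) k := fun i =>
    substAtX x1 p (if hi : i < b then h ⟨i, hi⟩ else 0) * X x1 ^ i
  refine ⟨fun i => if hi : (i : ℕ) < b then h ⟨i, hi⟩ else 0, ?_⟩
  calc ∑ i : Fin b, substAtX x1 p (h i) * X x1 ^ (i : ℕ) = ∑ i ∈ Finset.range b, F i := by
        rw [← Fin.sum_univ_eq_sum_range]
        exact Finset.sum_congr rfl fun i _ => by simp [F]
    _ = ∑ i ∈ Finset.range a, F i :=
        Finset.sum_subset (Finset.range_subset_range.mpr hba) fun i _ hi => by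
          simp [F, Finset.mem_range.not.mp hi, substAtX_zero]
    _ = _ := (Fin.sum_univ_eq_sum_range F a).symm

end Generation

section Axis

variable {σ R : Type*} [CommSemiring R] {x1 : σ}

theorem eq_single_of_weight_le {ω : σ → ℕ} {d : ℕ} (hω : ∀ j ≠ x1, d < ω j) {K : σ →₀ ℕ}
    (hK : weight ω K ≤ d) : K = single x1 (K x1) := by
  ext j
  by_cases hj : j = x1
  · simp [hj]
  · rw [single_eq_of_ne hj]
    by_contra hKj
    exact (hω j hj).not_ge ((le_weight_of_ne_zero' ω hKj).trans hK)

theorem hasInitialTerm_single_of_coeff_eq_zero {ω : σ → ℕ} {f : MvPowerSeries σ R} {b : ℕ}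
    (hx1 : ω x1 = 1) (hω : ∀ j ≠ x1, b < ω j) (hf : ∀ m < b, coeff (single x1 m) f = 0) :
    HasInitialTerm ω f (single x1 b) (coeff (single x1 b) f) := by
  classical
  intro K hK
  rw [weight_single, hx1, smul_eq_mul, mul_one] at hK
  have hKx := eq_single_of_weight_le hω hK
  rw [hKx, weight_single, hx1, smul_eq_mul, mul_one] at hK
  rw [hKx, coeff_monomial]
  rcases hK.lt_or_eq with hlt | heq
  · rw [hf _ hlt, if_neg fun h => hlt.ne (single_injective x1 h)]
  · rw [heq, if_pos rfl]

theorem coeff_single_mul_X_pow {c : MvPowerSeries σ R} (hc : ∀ K, K x1 ≠ 0 → coeff K c = 0)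
    (i m : ℕ) : coeff (single x1 m) (c * X x1 ^ i) = if i = m then constantCoeff c else 0 := by
  rw [X_pow_eq, coeff_mul_monomial, mul_one, ← single_tsub]
  simp only [single_le_single]
  split_ifs with hle him him
  · rw [him, Nat.sub_self, single_zero, coeff_zero_eq_constantCoeff_apply]
  · exact hc _ (by simp; omega)
  · omega
  · rfl

theorem coeff_single_self_X_pow_add_sum {a : ℕ} {c : Fin a → MvPowerSeries σ R}
    (hc : ∀ i K, K x1 ≠ 0 → coeff K (c i) = 0) :
    coeff (single x1 a) (X x1 ^ a + ∑ i : Fin a, c i * X x1 ^ (i : ℕ)) = 1 := by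
  classical
  have hlt : ∀ i : Fin a, (i : ℕ) ≠ a := fun i => i.isLt.ne
  simp [coeff_X_pow, coeff_single_mul_X_pow (hc _), hlt]

theorem constantCoeff_X_pow_add_sum {a : ℕ} (ha : 0 < a) {c : Fin a → MvPowerSeries σ R}
    (hc0 : constantCoeff (c ⟨0, ha⟩) = 0) :
    constantCoeff (X x1 ^ a + ∑ i : Fin a, c i * X x1 ^ (i : ℕ)) = 0 := by
  simp only [map_add, map_sum, map_mul, map_pow, constantCoeff_X, zero_pow ha.ne', zero_add]
  rw [Finset.sum_eq_single_of_mem ⟨0, ha⟩ (Finset.mem_univ _) fun i _ hi => by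
    rw [zero_pow fun h => hi (Fin.ext h), mul_zero], hc0, zero_mul]

theorem exists_minimal_coeff_single_ne_zero {f : MvPowerSeries σ R} {a : ℕ}
    (hfa : coeff (single x1 a) f ≠ 0) (hf0 : constantCoeff f = 0) :
    ∃ b, 0 < b ∧ b ≤ a ∧ coeff (single x1 b) f ≠ 0 ∧ ∀ m < b, coeff (single x1 m) f = 0 := by
  classical
  have hex : ∃ m, coeff (single x1 m) f ≠ 0 := ⟨a, hfa⟩
  refine ⟨Nat.find hex, Nat.pos_of_ne_zero fun h0 => (Nat.find_eq_zero hex).mp h0 ?_,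
    Nat.find_min' hex hfa, Nat.find_spec hex, fun m hm => not_not.mp (Nat.find_min hex hm)⟩
  rw [single_zero, coeff_zero_eq_constantCoeff_apply, hf0]

end Axis

/-- Let `p = x₁^a + Σ_{i<a} cᵢ(x₂,…,xₙ)·x₁^i` with `a ≥ 1` and `c₀` without constant term,
and let `S ⊆ k[[x₁,…,xₙ]]` be the image of the substitution homomorphism `y₁ ↦ p`,
`yⱼ ↦ xⱼ`.  Then `k[[x₁,…,xₙ]]` is generated as an `S`-module by `1, x₁, …, x₁^{a-1}`:
every `g` is an `S`-linear combination `g = Σ_{i<a} σ(hᵢ)·x₁^i`; in particular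
`k[[x₁,…,xₙ]]` is a finite ring extension of `S`. -/
theorem stmt14 {k : Type*} [Field k] (n : ℕ) (hn : 0 < n) (a : ℕ) (ha : 0 < a)
    (c : Fin a → MvPowerSeries (Fin n) k)
    (hc : ∀ i, ∀ K : Fin n →₀ ℕ, K ⟨0, hn⟩ ≠ 0 → MvPowerSeries.coeff K (c i) = 0)
    (hc0 : MvPowerSeries.constantCoeff (c ⟨0, ha⟩) = 0)
    (p : MvPowerSeries (Fin n) k)
    (hp : p = (MvPowerSeries.X ⟨0, hn⟩) ^ a
        + ∑ i : Fin a, c i * (MvPowerSeries.X ⟨0, hn⟩) ^ (i : ℕ)) :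
    ∀ g : MvPowerSeries (Fin n) k, ∃ h : Fin a → MvPowerSeries (Fin n) k,
      g = ∑ i : Fin a, substAtX ⟨0, hn⟩ p (h i) * (MvPowerSeries.X ⟨0, hn⟩) ^ (i : ℕ) := by
  intro g
  subst hp
  obtain ⟨b, hb, hba, hu, hmin⟩ := exists_minimal_coeff_single_ne_zero
    ((coeff_single_self_X_pow_add_sum hc).symm ▸ one_ne_zero) (constantCoeff_X_pow_add_sum ha hc0)
  have hinit := hasInitialTerm_single_of_coeff_eq_zero
    (ω := fun j => if j = ⟨0, hn⟩ then 1 else a + 1) (by simp) (fun j hj => by simp [hj]; omega)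
    hmin
  exact exists_eq_sum_substAtX_mul_X_pow_of_le hb hba hinit hu g
end

section
/- Let k be a field and α₁,…,αₙ ∈ kˣ such that ∏ᵢ αᵢ^{Kᵢ} ≠ 1 for every nonzero multi-index K ∈ ℕⁿ. Let φ be the scaling automorphism of k[[x₁,…,xₙ]] with φ(xᵢ) = αᵢ·xᵢ. Then for every unit u of k[[x₁,…,xₙ]] there exists a power series h ∈ k[[x₁,…,xₙ]] with constant coefficient 1 such that u·φ(h) = u₀·h, where u₀ ∈ kˣ is the constant coefficient of u; equivalently, u = u₀·h/φ(h). -/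
/-!
Comparing coefficients of `xᴷ`, the equation `u · h(αx) = u₀ · h` reads
`u₀ (1 - αᴷ) h_K = ∑_{a + b = K, a ≠ 0} u_a αᵇ h_b`.
For `K ≠ 0` the factor `u₀ (1 - αᴷ)` is invertible by the non-resonance hypothesis, and the
right-hand side only involves `h_b` with `b` of smaller total degree, so `h` is determined
recursively from `h₀ = 1`.
-/

open Finset

namespace MvPowerSeries

section Recursion

variable {σ k : Type*} [Field k] [DecidableEq σ]

theorem degree_snd_lt_of_mem_antidiagonal_erase {K : σ →₀ ℕ} {p : (σ →₀ ℕ) × (σ →₀ ℕ)}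
    (hp : p ∈ (antidiagonal K).erase (0, K)) : p.2.degree < K.degree := by
  obtain ⟨hne, hsum⟩ := mem_erase.mp hp
  rw [HasAntidiagonal.mem_antidiagonal] at hsum
  have hp₁ : p.1 ≠ 0 := fun h => hne (Prod.ext h (by simpa [h] using hsum))
  have := Nat.pos_of_ne_zero (mt (Finsupp.degree_eq_zero_iff _).mp hp₁)
  rw [← hsum, map_add]
  omega

noncomputable def coboundaryCoeff (a : σ → k) (u : MvPowerSeries σ k) (K : σ →₀ ℕ) : k :=
  if K = 0 then 1 else
    (constantCoeff u * (1 - K.prod fun s m => a s ^ m))⁻¹ *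
      ∑ p ∈ ((antidiagonal K).erase (0, K)).attach,
        coeff p.1.1 u * ((p.1.2.prod fun s m => a s ^ m) * coboundaryCoeff a u p.1.2)
termination_by K.degree
decreasing_by exact degree_snd_lt_of_mem_antidiagonal_erase p.2

theorem coboundaryCoeff_zero (a : σ → k) (u : MvPowerSeries σ k) :
    coboundaryCoeff a u 0 = 1 := by
  rw [coboundaryCoeff, if_pos rfl]

theorem constantCoeff_mul_one_sub_mul_coboundaryCoeff {a : σ → k}
    (ha : ∀ K : σ →₀ ℕ, K ≠ 0 → (K.prod fun s m => a s ^ m) ≠ 1)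
    {u : MvPowerSeries σ k} (hu : constantCoeff u ≠ 0) (K : σ →₀ ℕ) :
    constantCoeff u * (1 - K.prod fun s m => a s ^ m) * coboundaryCoeff a u K =
      ∑ p ∈ (antidiagonal K).erase (0, K),
        coeff p.1 u * ((p.2.prod fun s m => a s ^ m) * coboundaryCoeff a u p.2) := by
  by_cases hK : K = 0
  · subst hK
    simp [Finsupp.prod_zero_index]
  · have hunit : constantCoeff u * (1 - K.prod fun s m => a s ^ m) ≠ 0 :=
      mul_ne_zero hu (sub_ne_zero.mpr (ha K hK).symm)
    rw [coboundaryCoeff, if_neg hK, ← mul_assoc, mul_inv_cancel₀ hunit, one_mul,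
      sum_attach ((antidiagonal K).erase (0, K))
        fun p => coeff p.1 u * ((p.2.prod fun s m => a s ^ m) * coboundaryCoeff a u p.2)]

end Recursion

theorem exists_constantCoeff_eq_one_and_mul_rescale_eq {σ k : Type*} [Field k] {a : σ → k}
    (ha : ∀ K : σ →₀ ℕ, K ≠ 0 → (K.prod fun s m => a s ^ m) ≠ 1)
    {u : MvPowerSeries σ k} (hu : constantCoeff u ≠ 0) :
    ∃ h : MvPowerSeries σ k, constantCoeff h = 1 ∧ u * rescale a h = C (constantCoeff u) * h := by
  classical
  let h : MvPowerSeries σ k := fun K => coboundaryCoeff a u K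
  have coeff_h (K : σ →₀ ℕ) : coeff K h = coboundaryCoeff a u K := rfl
  refine ⟨h, coboundaryCoeff_zero a u, ?_⟩
  ext K
  rw [coeff_mul, coeff_C_mul,
    ← add_sum_erase _ _ (HasAntidiagonal.mem_antidiagonal.mpr (zero_add K) : (0, K) ∈ antidiagonal K)]
  simp only [coeff_rescale, coeff_h]
  rw [← constantCoeff_mul_one_sub_mul_coboundaryCoeff ha hu K, coeff_zero_eq_constantCoeff_apply]
  ring

end MvPowerSeries

/-- Let `k` be a field and `α₁,…,αₙ ∈ kˣ` such that `∏ᵢ αᵢ^{Kᵢ} ≠ 1` for every nonzero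
multi-index `K`.  Let `φ` be the scaling automorphism of `k[[x₁,…,xₙ]]` with
`φ(xᵢ) = αᵢ·xᵢ` (i.e. `(φg)_K = (∏ᵢ αᵢ^{Kᵢ})·g_K`).  Then for every unit `u` of
`k[[x₁,…,xₙ]]` there exists `h` with constant coefficient `1` such that
`u·φ(h) = u₀·h`, where `u₀` is the constant coefficient of `u`. -/
theorem stmt16 {k : Type*} [Field k] (n : ℕ) (α : Fin n → kˣ)
    (hα : ∀ K : Fin n →₀ ℕ, K ≠ 0 → (∏ i, (α i : k) ^ K i) ≠ 1)
    (φ : MvPowerSeries (Fin n) k ≃ₐ[k] MvPowerSeries (Fin n) k)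
    (hφ : ∀ (g : MvPowerSeries (Fin n) k) (K : Fin n →₀ ℕ),
      MvPowerSeries.coeff (R := k) K (φ g) = (∏ i, (α i : k) ^ K i) * MvPowerSeries.coeff (R := k) K g)
    (u : MvPowerSeries (Fin n) k) (hu : IsUnit u) :
    ∃ h : MvPowerSeries (Fin n) k,
      MvPowerSeries.constantCoeff (σ := Fin n) (R := k) h = 1 ∧
        u * φ h = MvPowerSeries.C (σ := Fin n) (R := k) (MvPowerSeries.constantCoeff (σ := Fin n) (R := k) u) * h := by
  have hφ_eq : ∀ g, φ g = MvPowerSeries.rescale (fun i => (α i : k)) g := fun g => by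
    ext K
    rw [hφ, MvPowerSeries.coeff_rescale, Finsupp.prod_pow]
  obtain ⟨h, h_const, h_eq⟩ := MvPowerSeries.exists_constantCoeff_eq_one_and_mul_rescale_eq
    (a := fun i => (α i : k)) (fun K hK => by rw [Finsupp.prod_pow]; exact hα K hK)
    (MvPowerSeries.isUnit_constantCoeff u hu).ne_zero
  exact ⟨h, h_const, by rw [hφ_eq]; exact h_eq⟩
end

section
/- Let k be an algebraically closed field equipped with an absolute value v, let t > 1 be a real number, and let α₁,…,αₙ ∈ k satisfy v(αᵢ) = t for all i. Let φ be the scaling automorphism of k[[x₁,…,xₙ]] with φ(xᵢ) = αᵢ·xᵢ, and let I be a prime ideal of k[[x₁,…,xₙ]] with φ(I) = I which is contained in, but not equal to, the maximal ideal m = (x₁,…,xₙ). Then there exist λ₁,…,λₙ ∈ k, not all zero, such that I is contained in the kernel of the continuous k-algebra substitution homomorphism π : k[[x₁,…,xₙ]] → k[[x]] with π(xᵢ) = λᵢ·x (i.e. f(λ₁x,…,λₙx) = 0 for every f ∈ I); moreover there exists an integer N ≥ 1 such that αᵢ^N = αⱼ^N whenever λᵢ ≠ 0 and λⱼ ≠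 0. -/
/-!
The scaling `φ = rescale α` acts diagonally on monomials, `x^K ↦ α^K x^K`. On the finitely many
eigenvalues `α^K` with `|K| < D`, any selection of coefficients that depends on `α^K` alone agrees
with a polynomial in `φ`; as ideals of the noetherian, `m`-adically complete ring `k[[x₁,…,xₙ]]`
are closed (Krull), a `φ`-stable ideal is stable under every such selection. Since
`v(α^K) = t^|K|` with `t > 1`, `I` is in particular homogeneous: the polynomials in `I` cut out a
cone, which by the Nullstellensatz and primality of `I ≠ m` contains a point `λ ≠ 0`, and then
`f(λx) = 0` for all `f ∈ I`.

Take such a `λ` with the fewest nonzero coordinates. If `αᵢ, αⱼ` with `λᵢ, λⱼ ≠ 0` had no common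
power, a homomorphism `w` from the group generated by the `α`'s to `ℤ` would separate them.
Keeping only the coordinates of `λ` of minimal weight `μ` gives again a zero of `I`, since in
degree `d` it only sees the part of `f` of weight `μ d`, which lies in `I`; this contradicts
minimality.
-/

/-- The continuous `k`-algebra substitution homomorphism `k[[x₁,…,xₙ]] → k[[x]]`,
`xᵢ ↦ λᵢ·x`: the coefficient of `x^d` in `f(λ₁x,…,λₙx)` is
`Σ_{|K| = d} f_K·∏ᵢ λᵢ^{Kᵢ}`. -/
noncomputable def lineSubst {k : Type*} [CommSemiring k] {n : ℕ} (lam : Fin n → k)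
    (f : MvPowerSeries (Fin n) k) : PowerSeries k :=
  PowerSeries.mk fun d => ∑ K ∈ Finset.finsuppAntidiag (Finset.univ : Finset (Fin n)) d,
    MvPowerSeries.coeff K f * ∏ i, lam i ^ K i

theorem coeff_lineSubst {k : Type*} [CommSemiring k] {n : ℕ} (lam : Fin n → k)
    (f : MvPowerSeries (Fin n) k) (d : ℕ) :
    PowerSeries.coeff d (lineSubst lam f) =
      ∑ K ∈ Finset.finsuppAntidiag Finset.univ d, MvPowerSeries.coeff K f * ∏ i, lam i ^ K i :=
  PowerSeries.coeff_mk _ _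

-- Krull's intersection theorem for the module `R ⧸ I`.
theorem Ideal.mem_of_forall_mem_sup_pow {R : Type*} [CommRing R] [IsNoetherianRing R]
    {I m : Ideal R} (hm : m ≤ (⊥ : Ideal R).jacobson) {x : R} (hx : ∀ D : ℕ, x ∈ I ⊔ m ^ D) :
    x ∈ I := by
  have hKrull := Ideal.iInf_pow_smul_eq_bot_of_le_jacobson (M := R ⧸ I) m hm
  rw [← Submodule.Quotient.mk_eq_zero, ← Submodule.mem_bot R, ← hKrull, Submodule.mem_iInf]
  intro D
  obtain ⟨a, ha, b, hb, rfl⟩ := Submodule.mem_sup.mp (hx D)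
  rw [Submodule.Quotient.mk_add, (Submodule.Quotient.mk_eq_zero I).mpr ha, zero_add,
    ← mul_one b, ← smul_eq_mul, Submodule.Quotient.mk_smul]
  exact Submodule.smul_mem_smul hb Submodule.mem_top

theorem Finsupp.degree_eq_of_prod_pow_eq {σ k : Type*} [Fintype σ] [Field k]
    (v : AbsoluteValue k ℝ) {t : ℝ} (ht : 1 < t) {α : σ → k} (hα : ∀ s, v (α s) = t)
    {K K' : σ →₀ ℕ} (h : ∏ s, α s ^ K s = ∏ s, α s ^ K' s) : K.degree = K'.degree := by
  have hv (K : σ →₀ ℕ) : v (∏ s, α s ^ K s) = t ^ K.degree := by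
    simp [map_prod, hα, Finset.prod_pow_eq_pow_sum, Finsupp.degree_eq_sum]
  exact pow_right_injective₀ (by linarith) ht.ne' (by simpa [hv] using congrArg v h)

theorem prod_ite_pow_eq {ι M : Type*} [Fintype ι] [CommMonoidWithZero M]
    (q : ι → Prop) [DecidablePred q] (lam : ι → M) (K : ι → ℕ) :
    ∏ l, (if q l then lam l else 0) ^ K l =
      if ∀ l, K l ≠ 0 → q l then ∏ l, lam l ^ K l else 0 := by
  split_ifs with h
  · refine Finset.prod_congr rfl fun l _ => ?_
    by_cases hK : K l = 0
    · simp [hK]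
    · rw [if_pos (h l hK)]
  · obtain ⟨l, hK, hq⟩ : ∃ l, K l ≠ 0 ∧ ¬q l := by
      simpa only [not_forall, exists_prop] using h
    exact Finset.prod_eq_zero (Finset.mem_univ l) (by simp [hq, hK])

theorem sum_mul_eq_mul_sum_iff_of_le {ι : Type*} [Fintype ι] {K : ι → ℕ} {w : ι → ℤ} {μ : ℤ}
    (hμ : ∀ l, K l ≠ 0 → μ ≤ w l) :
    ∑ l, (K l : ℤ) * w l = μ * ∑ l, (K l : ℤ) ↔ ∀ l, K l ≠ 0 → w l = μ := by
  have hnonneg (l : ι) : 0 ≤ (K l : ℤ) * (w l - μ) := by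
    rcases eq_or_ne (K l) 0 with hK | hK
    · simp [hK]
    · exact mul_nonneg (Int.natCast_nonneg _) (sub_nonneg.mpr (hμ l hK))
  rw [← sub_eq_zero, Finset.mul_sum, ← Finset.sum_sub_distrib]
  simp_rw [show ∀ l, (K l : ℤ) * w l - μ * K l = K l * (w l - μ) from fun l => by ring]
  rw [Finset.sum_eq_zero_iff_of_nonneg fun l _ => hnonneg l]
  simp [sub_eq_zero, or_iff_not_imp_left]

theorem Finset.exists_pow_eq_pow {ι M : Type*} [Monoid M] (s : Finset ι) (a : ι → M)
    (h : ∀ i ∈ s, ∀ j ∈ s, ∃ N, 0 < N ∧ a i ^ N = a j ^ N) :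
    ∃ N, 0 < N ∧ ∀ i ∈ s, ∀ j ∈ s, a i ^ N = a j ^ N := by
  classical
  choose! N hN using h
  refine ⟨∏ i ∈ s, ∏ j ∈ s, N i j,
    Finset.prod_pos fun i hi => Finset.prod_pos fun j hj => (hN i hi j hj).1, fun i hi j hj => ?_⟩
  obtain ⟨c, hc⟩ := (Finset.dvd_prod_of_mem (N i) hj).trans
    (Finset.dvd_prod_of_mem (fun i => ∏ j ∈ s, N i j) hi)
  rw [hc, pow_mul, pow_mul, (hN i hi j hj).2]

theorem Module.exists_dual_ne_zero_of_forall_nsmul_ne_zero {A : Type*} [AddCommGroup A]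
    [Module.Finite ℤ A] {x : A} (hx : ∀ N : ℕ, 0 < N → N • x ≠ 0) :
    ∃ f : Module.Dual ℤ A, f x ≠ 0 := by
  have hx' : Submodule.Quotient.mk (p := Submodule.torsion ℤ A) x ≠ 0 := by
    rw [ne_eq, Submodule.Quotient.mk_eq_zero, Submodule.mem_torsion_iff]
    rintro ⟨⟨c, hc⟩, hcx⟩
    refine hx c.natAbs (Int.natAbs_pos.mpr (nonZeroDivisors.ne_zero hc)) ?_
    rw [← natCast_zsmul]
    rcases Int.natAbs_eq c with h | h
    · rwa [← h]
    · rw [← neg_eq_zero, ← neg_zsmul, ← h]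
      exact hcx
  obtain ⟨f, hf⟩ := Module.Projective.exists_dual_ne_zero ℤ hx'
  exact ⟨f ∘ₗ (Submodule.torsion ℤ A).mkQ, hf⟩

theorem CommGroup.exists_weight_ne {G ι : Type*} [CommGroup G] [Fintype ι] [DecidableEq ι]
    (a : ι → G) {i j : ι} (hij : ∀ N : ℕ, 0 < N → a i ^ N ≠ a j ^ N) :
    ∃ w : ι → ℤ, (∀ K K' : ι → ℕ, ∏ l, a l ^ K l = ∏ l, a l ^ K' l →
      ∑ l, (K l : ℤ) * w l = ∑ l, (K' l : ℤ) * w l) ∧ w i ≠ w j := by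
  let Φ : (ι → ℤ) →ₗ[ℤ] Additive G := Fintype.linearCombination ℤ fun l => Additive.ofMul (a l)
  have hΦ (u : ι → ℤ) : Φ u = Additive.ofMul (∏ l, a l ^ u l) := by
    simp [Φ, Fintype.linearCombination_apply, ofMul_prod, ofMul_zpow]
  let e (l : ι) : ι → ℤ := Pi.single l 1
  have hΦij (N : ℕ) (hN : 0 < N) : N • Φ.rangeRestrict (e i - e j) ≠ 0 := by
    intro h
    have h' : N • (Additive.ofMul (a i) - Additive.ofMul (a j)) = 0 := by
      simpa [Φ, e] using congrArg Subtype.val h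
    rw [← ofMul_div, ← ofMul_pow, ofMul_eq_zero, div_pow, div_eq_one] at h'
    exact hij N hN h'
  obtain ⟨f, hf⟩ := Module.exists_dual_ne_zero_of_forall_nsmul_ne_zero hΦij
  let F : Module.Dual ℤ (ι → ℤ) := f ∘ₗ Φ.rangeRestrict
  have hF (u : ι → ℤ) : F u = ∑ l, u l * F (e l) := by
    have he (l : ι) : (fun m => if l = m then (1 : ℤ) else 0) = e l := by
      ext m
      simp [e, Pi.single_apply, eq_comm]
    simpa only [he, smul_eq_mul] using LinearMap.pi_apply_eq_sum_univ F u
  refine ⟨fun l => F (e l), fun K K' h => ?_, fun h => hf ?_⟩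
  · rw [← hF, ← hF]
    refine congrArg f (Subtype.ext ?_)
    simp only [LinearMap.codRestrict_apply, hΦ, zpow_natCast, h]
  · change F (e i - e j) = 0
    rw [map_sub, sub_eq_zero]
    exact h

namespace MvPowerSeries

variable {σ R k : Type*}

theorem exists_eq_sum_X_mul_of_le_order [CommSemiring R] [Fintype σ] [LinearOrder σ]
    {f : MvPowerSeries σ R} {D : ℕ} (hf : ((D + 1 : ℕ) : ℕ∞) ≤ f.order) :
    ∃ g : σ → MvPowerSeries σ R, (∀ i, (D : ℕ∞) ≤ (g i).order) ∧ f = ∑ i, X i * g i := by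
  classical
  -- the monomial `x^K` is charged to the smallest variable occurring in it
  let g : σ → MvPowerSeries σ R := fun i K =>
    if ∀ j < i, K j = 0 then coeff (K + Finsupp.single i 1) f else 0
  have hg (i : σ) (K : σ →₀ ℕ) :
      coeff K (g i) = if ∀ j < i, K j = 0 then coeff (K + Finsupp.single i 1) f else 0 := rfl
  have coeff_X_mul_g (i : σ) (K : σ →₀ ℕ) :
      coeff K (X i * g i) = if K i ≠ 0 ∧ ∀ j < i, K j = 0 then coeff K f else 0 := by
    rw [X_def, coeff_monomial_mul, one_mul]
    by_cases hK : Finsupp.single i 1 ≤ K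
    · have hKi : K i ≠ 0 := by
        have := Finsupp.single_le_iff.mp hK
        omega
      have hlow : (∀ j < i, (K - Finsupp.single i 1 : σ →₀ ℕ) j = 0) ↔ ∀ j < i, K j = 0 :=
        forall₂_congr fun j hj => by rw [Finsupp.tsub_apply, Finsupp.single_eq_of_ne hj.ne,
          tsub_zero]
      rw [if_pos hK, hg, tsub_add_cancel_of_le hK]
      exact if_congr (hlow.trans (and_iff_right hKi).symm) rfl rfl
    · have hKi : K i = 0 := by
        rw [Finsupp.single_le_iff] at hK
        omega
      simp [hK, hKi]
  refine ⟨g, fun i => le_order fun K hK => ?_, ext fun K => ?_⟩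
  · rw [hg]
    split_ifs
    · refine coeff_of_lt_order (lt_of_lt_of_le ?_ hf)
      rw [map_add, Finsupp.degree_single]
      exact_mod_cast Nat.add_lt_add_right (by exact_mod_cast hK) 1
    · rfl
  · simp only [map_sum, coeff_X_mul_g]
    rcases eq_or_ne K 0 with rfl | hK
    · simp only [Finsupp.coe_zero, Pi.zero_apply, ne_eq, not_true_eq_false, false_and, if_false,
        Finset.sum_const_zero]
      exact coeff_of_lt_order (lt_of_lt_of_le (by simp) hf)
    · have hne := Finsupp.support_nonempty_iff.mpr hK
      have hmin := Finsupp.mem_support_iff.mp (K.support.min'_mem hne)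
      have hpivot (i : σ) : (K i ≠ 0 ∧ ∀ j < i, K j = 0) ↔ i = K.support.min' hne := by
        constructor
        · rintro ⟨hi, hlow⟩
          refine le_antisymm ?_ (K.support.min'_le _ (Finsupp.mem_support_iff.mpr hi))
          by_contra! hlt
          exact hmin (hlow _ hlt)
        · rintro rfl
          refine ⟨hmin, fun j hj => ?_⟩
          by_contra hj'
          exact (K.support.min'_le _ (Finsupp.mem_support_iff.mpr hj')).not_gt hj
      simp only [hpivot, Finset.sum_ite_eq', Finset.mem_univ, if_true]

theorem mem_span_X_pow_of_le_order [CommSemiring R] [Fintype σ] [LinearOrder σ]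
    {f : MvPowerSeries σ R} {D : ℕ} (hf : (D : ℕ∞) ≤ f.order) :
    f ∈ Ideal.span (Set.range X) ^ D := by
  induction D generalizing f with
  | zero => simp
  | succ D ih =>
    obtain ⟨g, hg, rfl⟩ := exists_eq_sum_X_mul_of_le_order hf
    rw [pow_succ']
    exact Ideal.sum_mem _ fun i _ =>
      Ideal.mul_mem_mul (Ideal.subset_span ⟨i, rfl⟩) (ih (hg i))

theorem mem_ideal_of_forall_exists_le_order_sub [CommRing R] [IsNoetherianRing R] [Fintype σ]
    [LinearOrder σ] {I : Ideal (MvPowerSeries σ R)} {f : MvPowerSeries σ R}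
    (hf : ∀ D : ℕ, ∃ g ∈ I, (D : ℕ∞) ≤ (f - g).order) : f ∈ I := by
  refine Ideal.mem_of_forall_mem_sup_pow
    (IsAdicComplete.le_jacobson_bot (Ideal.span (Set.range X))) fun D => ?_
  obtain ⟨g, hg, hD⟩ := hf D
  rw [← add_sub_cancel g f]
  exact Submodule.add_mem_sup hg (mem_span_X_pow_of_le_order hD)

def filterCoeffs [Semiring R] (P : (σ →₀ ℕ) → Prop) [DecidablePred P]
    (f : MvPowerSeries σ R) : MvPowerSeries σ R :=
  fun K => if P K then coeff K f else 0

theorem coeff_filterCoeffs [Semiring R] (P : (σ →₀ ℕ) → Prop) [DecidablePred P]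
    (f : MvPowerSeries σ R) (K : σ →₀ ℕ) :
    coeff K (filterCoeffs P f) = if P K then coeff K f else 0 :=
  rfl

noncomputable def homogeneousComponentPoly [CommSemiring R] [Fintype σ] [DecidableEq σ] (d : ℕ)
    (f : MvPowerSeries σ R) : MvPolynomial σ R :=
  ∑ K ∈ Finset.finsuppAntidiag Finset.univ d, MvPolynomial.monomial K (coeff K f)

theorem coe_homogeneousComponentPoly [CommSemiring R] [Fintype σ] [DecidableEq σ] (d : ℕ)
    (f : MvPowerSeries σ R) :
    (homogeneousComponentPoly d f : MvPowerSeries σ R) = homogeneousComponent d f := by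
  ext K
  rw [MvPolynomial.coeff_coe, homogeneousComponentPoly, MvPolynomial.coeff_sum]
  simp [MvPolynomial.coeff_monomial, coeff_homogeneousComponent, Finset.mem_finsuppAntidiag,
    Finsupp.degree_eq_sum]

theorem eval_homogeneousComponentPoly [CommSemiring R] {n : ℕ} (lam : Fin n → R) (d : ℕ)
    (f : MvPowerSeries (Fin n) R) :
    MvPolynomial.eval lam (homogeneousComponentPoly d f) =
      PowerSeries.coeff d (lineSubst lam f) := by
  simp [homogeneousComponentPoly, coeff_lineSubst, MvPolynomial.eval_monomial, Finsupp.prod_pow]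

section Rescale

variable [Field k] {α : σ → k} {I : Ideal (MvPowerSeries σ k)}

theorem coeff_rescale_pow [Fintype σ] (α : σ → k) (m : ℕ) (f : MvPowerSeries σ k)
    (K : σ →₀ ℕ) : coeff K (rescale (α ^ m) f) = (∏ s, α s ^ K s) ^ m * coeff K f := by
  rw [coeff_rescale, Finsupp.prod_fintype _ _ fun _ => pow_zero _, ← Finset.prod_pow]
  simp only [Pi.pow_apply, pow_right_comm]

theorem rescale_pow_mem (hI : ∀ f ∈ I, rescale α f ∈ I) (m : ℕ) {f : MvPowerSeries σ k}
    (hf : f ∈ I) : rescale (α ^ m) f ∈ I := by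
  induction m with
  | zero => simpa [rescale_one] using hf
  | succ m ih =>
    rw [pow_succ, ← rescale_rescale]
    exact hI _ ih

theorem exists_mem_coeff_eq_eval_mul [Fintype σ] (hI : ∀ f ∈ I, rescale α f ∈ I)
    (p : Polynomial k) {f : MvPowerSeries σ k} (hf : f ∈ I) :
    ∃ g ∈ I, ∀ K, coeff K g = p.eval (∏ s, α s ^ K s) * coeff K f := by
  refine ⟨∑ m ∈ Finset.range (p.natDegree + 1), C (p.coeff m) * rescale (α ^ m) f,
    Ideal.sum_mem _ fun m _ => Ideal.mul_mem_left _ _ (rescale_pow_mem hI m hf), fun K => ?_⟩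
  rw [map_sum, Polynomial.eval_eq_sum_range, Finset.sum_mul]
  refine Finset.sum_congr rfl fun m _ => ?_
  rw [coeff_C_mul, coeff_rescale_pow, mul_assoc]

theorem filterCoeffs_mem [Fintype σ] [LinearOrder σ] (hI : ∀ f ∈ I, rescale α f ∈ I)
    (P : (σ →₀ ℕ) → Prop) [DecidablePred P]
    (hP : ∀ K K', ∏ s, α s ^ K s = ∏ s, α s ^ K' s → (P K ↔ P K'))
    {f : MvPowerSeries σ k} (hf : f ∈ I) : filterCoeffs P f ∈ I := by
  classical
  refine mem_ideal_of_forall_exists_le_order_sub fun D => ?_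
  -- interpolate the indicator of `P` at the eigenvalues of the monomials of degree `< D`
  let nodes : Finset k :=
    (Finsupp.finite_of_degree_lt D).toFinset.image fun K => ∏ s, α s ^ K s
  let p := Lagrange.interpolate nodes id fun c =>
    if ∃ K, ∏ s, α s ^ K s = c ∧ P K then 1 else 0
  obtain ⟨g, hgI, hg⟩ := exists_mem_coeff_eq_eval_mul hI p hf
  refine ⟨g, hgI, le_order fun K hK => ?_⟩
  have hnode : ∏ s, α s ^ K s ∈ nodes := Finset.mem_image_of_mem _
    ((Finsupp.finite_of_degree_lt D).mem_toFinset.mpr (by exact_mod_cast hK))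
  have hp : p.eval (∏ s, α s ^ K s) = if P K then 1 else 0 := by
    refine (Lagrange.eval_interpolate_at_node _ Function.injective_id.injOn hnode).trans ?_
    exact if_congr ⟨fun ⟨K', h, hK'⟩ => (hP K' K h).mp hK', fun h => ⟨K, rfl, h⟩⟩ rfl rfl
  rw [map_sub, coeff_filterCoeffs, hg, hp]
  split_ifs <;> simp

theorem homogeneousComponent_mem [Fintype σ] [LinearOrder σ] (hI : ∀ f ∈ I, rescale α f ∈ I)
    (v : AbsoluteValue k ℝ) {t : ℝ} (ht : 1 < t) (hα : ∀ s, v (α s) = t) (d : ℕ)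
    {f : MvPowerSeries σ k} (hf : f ∈ I) : homogeneousComponent d f ∈ I := by
  classical
  have hfilter : homogeneousComponent d f = filterCoeffs (fun K => K.degree = d) f :=
    ext fun K => by rw [coeff_homogeneousComponent, coeff_filterCoeffs]
  rw [hfilter]
  exact filterCoeffs_mem hI _ (fun K K' h => by
    rw [Finsupp.degree_eq_of_prod_pow_eq v ht hα h]) hf

end Rescale

section LineSubst

variable [Field k]

theorem exists_ne_zero_mem_zeroLocus_comap [IsAlgClosed k] [Finite σ]
    (I : Ideal (MvPowerSeries σ k)) [I.IsPrime] (hI : I < Ideal.span (Set.range X)) :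
    ∃ lam : σ → k, lam ≠ 0 ∧
      lam ∈ MvPolynomial.zeroLocus k (I.comap MvPolynomial.coeToMvPowerSeries.ringHom) := by
  by_contra! h
  refine hI.not_ge (Ideal.span_le.mpr ?_)
  rintro _ ⟨i, rfl⟩
  have hX : MvPolynomial.X i ∈ MvPolynomial.vanishingIdeal k
      (MvPolynomial.zeroLocus k (I.comap MvPolynomial.coeToMvPowerSeries.ringHom)) := by
    refine MvPolynomial.mem_vanishingIdeal_iff.mpr fun x hx => ?_
    by_cases hx0 : x = 0
    · simp [hx0]
    · exact absurd hx (h x hx0)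
  simpa using hX

theorem exists_ne_zero_forall_lineSubst_eq_zero [IsAlgClosed k] {n : ℕ}
    (I : Ideal (MvPowerSeries (Fin n) k)) [I.IsPrime] (hI : I < Ideal.span (Set.range X))
    (hhom : ∀ f ∈ I, ∀ d, homogeneousComponent d f ∈ I) :
    ∃ lam : Fin n → k, lam ≠ 0 ∧ ∀ f ∈ I, lineSubst lam f = 0 := by
  obtain ⟨lam, hne, hlam⟩ := exists_ne_zero_mem_zeroLocus_comap I hI
  refine ⟨lam, hne, fun f hf => PowerSeries.ext fun d => ?_⟩
  rw [← eval_homogeneousComponentPoly, map_zero, ← MvPolynomial.coe_aeval_eq_eval]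
  refine hlam _ ?_
  rw [Ideal.mem_comap, MvPolynomial.coeToMvPowerSeries.ringHom_apply,
    coe_homogeneousComponentPoly]
  exact hhom f hf d

variable {n : ℕ} {α : Fin n → k} {I : Ideal (MvPowerSeries (Fin n) k)}

theorem forall_lineSubst_restrict_eq_zero (hI : ∀ f ∈ I, rescale α f ∈ I)
    (v : AbsoluteValue k ℝ) {t : ℝ} (ht : 1 < t) (hα : ∀ s, v (α s) = t) {w : Fin n → ℤ}
    (hw : ∀ K K' : Fin n →₀ ℕ, ∏ l, α l ^ K l = ∏ l, α l ^ K' l →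
      ∑ l, (K l : ℤ) * w l = ∑ l, (K' l : ℤ) * w l)
    {lam : Fin n → k} (hlam : ∀ f ∈ I, lineSubst lam f = 0) {μ : ℤ}
    (hμ : ∀ l, lam l ≠ 0 → μ ≤ w l) :
    ∀ f ∈ I, lineSubst (fun l => if w l = μ then lam l else 0) f = 0 := by
  classical
  intro f hf
  refine PowerSeries.ext fun d => ?_
  let P : (Fin n →₀ ℕ) → Prop := fun K => K.degree = d ∧ ∑ l, (K l : ℤ) * w l = μ * d
  have hP : filterCoeffs P f ∈ I := filterCoeffs_mem hI P (fun K K' h => by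
    simp only [P, Finsupp.degree_eq_of_prod_pow_eq v ht hα h, hw K K' h]) hf
  have h0 := congrArg (PowerSeries.coeff d) (hlam _ hP)
  rw [map_zero, coeff_lineSubst] at h0 ⊢
  refine (Finset.sum_congr rfl fun K hK => ?_).trans h0
  have hdeg : K.degree = d := by
    simpa [Finsupp.degree_eq_sum] using (Finset.mem_finsuppAntidiag.mp hK).1
  rw [coeff_filterCoeffs, prod_ite_pow_eq]
  by_cases hz : ∏ l, lam l ^ K l = 0
  · simp [hz]
  have hsupp (l : Fin n) (hl : K l ≠ 0) : lam l ≠ 0 := fun h =>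
    hz (Finset.prod_eq_zero (Finset.mem_univ l) (by simp [h, hl]))
  have hPK : P K ↔ ∀ l, K l ≠ 0 → w l = μ := by
    rw [← sum_mul_eq_mul_sum_iff_of_le fun l hl => hμ l (hsupp l hl)]
    simp [P, hdeg, ← Nat.cast_sum, ← Finsupp.degree_eq_sum]
  simp only [hPK]
  split_ifs <;> ring

theorem exists_forall_lineSubst_eq_zero_support_lt (hI : ∀ f ∈ I, rescale α f ∈ I)
    (v : AbsoluteValue k ℝ) {t : ℝ} (ht : 1 < t) (hα : ∀ s, v (α s) = t)
    {lam : Fin n → k} (hlam : ∀ f ∈ I, lineSubst lam f = 0) {i j : Fin n} (hi : lam i ≠ 0)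
    (hj : lam j ≠ 0) (hij : ∀ N : ℕ, 0 < N → α i ^ N ≠ α j ^ N) :
    ∃ lam' : Fin n → k, lam' ≠ 0 ∧ (∀ f ∈ I, lineSubst lam' f = 0) ∧
      (Function.support lam').ncard < (Function.support lam).ncard := by
  classical
  have hα0 (l : Fin n) : α l ≠ 0 := fun h => by
    have := hα l
    rw [h, map_zero] at this
    linarith
  let a (l : Fin n) : kˣ := Units.mk0 (α l) (hα0 l)
  obtain ⟨w, hw, hwij⟩ := CommGroup.exists_weight_ne a (i := i) (j := j) fun N hN h =>
    hij N hN (by simpa [a] using congrArg Units.val h)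
  have hw' (K K' : Fin n →₀ ℕ) (h : ∏ l, α l ^ K l = ∏ l, α l ^ K' l) :
      ∑ l, (K l : ℤ) * w l = ∑ l, (K' l : ℤ) * w l :=
    hw K K' (Units.ext (by simpa [a] using h))
  obtain ⟨l₀, hl₀, hmin⟩ :=
    Set.exists_min_image (Function.support lam) w (Set.toFinite _) ⟨i, hi⟩
  refine ⟨fun l => if w l = w l₀ then lam l else 0, fun h => hl₀ (by simpa using congrFun h l₀),
    forall_lineSubst_restrict_eq_zero hI v ht hα hw' hlam fun l hl => hmin l hl,
    Set.ncard_lt_ncard ⟨fun l hl => ?_, fun hsupp => ?_⟩⟩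
  · by_contra h
    exact hl (by simp [Function.notMem_support.mp h])
  · obtain h | h : w i ≠ w l₀ ∨ w j ≠ w l₀ := by
      by_contra! h
      exact hwij (h.1.trans h.2.symm)
    · exact hsupp hi (by simp [h])
    · exact hsupp hj (by simp [h])

end LineSubst

end MvPowerSeries

/-- Let `k` be an algebraically closed field with an absolute value `v`, `t > 1`, and
`α₁,…,αₙ ∈ k` with `v(αᵢ) = t`.  Let `φ` be the scaling automorphism of `k[[x₁,…,xₙ]]`
with `φ(xᵢ) = αᵢ·xᵢ`, and let `I` be a prime ideal with `φ(I) = I`, contained in but not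
equal to the maximal ideal `m = (x₁,…,xₙ)`.  Then there are `λ₁,…,λₙ ∈ k`, not all zero,
with `I` contained in the kernel of the substitution homomorphism `xᵢ ↦ λᵢ·x` into
`k[[x]]`; moreover there is `N ≥ 1` with `αᵢ^N = αⱼ^N` whenever `λᵢ ≠ 0 ≠ λⱼ`. -/
theorem stmt18 {k : Type*} [Field k] [IsAlgClosed k] (v : AbsoluteValue k ℝ)
    (t : ℝ) (ht : 1 < t) (n : ℕ) (α : Fin n → k) (hα : ∀ i, v (α i) = t)
    (φ : MvPowerSeries (Fin n) k ≃ₐ[k] MvPowerSeries (Fin n) k)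
    (hφ : ∀ (g : MvPowerSeries (Fin n) k) (K : Fin n →₀ ℕ),
      MvPowerSeries.coeff K (φ g) = (∏ i, α i ^ K i) * MvPowerSeries.coeff K g)
    (I : Ideal (MvPowerSeries (Fin n) k)) (hI : I.IsPrime) (hφI : Ideal.map φ I = I)
    (hIle : I ≤ Ideal.span (Set.range (MvPowerSeries.X : Fin n → MvPowerSeries (Fin n) k)))
    (hIne : I ≠ Ideal.span (Set.range (MvPowerSeries.X : Fin n → MvPowerSeries (Fin n) k))) :
    ∃ lam : Fin n → k, lam ≠ 0 ∧
      (∀ f ∈ I, lineSubst lam f = 0) ∧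
      ∃ N : ℕ, 1 ≤ N ∧ ∀ i j, lam i ≠ 0 → lam j ≠ 0 → α i ^ N = α j ^ N := by
  have hφ_eq (g : MvPowerSeries (Fin n) k) : φ g = MvPowerSeries.rescale α g :=
    MvPowerSeries.ext fun K => by
      rw [hφ, MvPowerSeries.coeff_rescale, Finsupp.prod_fintype _ _ fun _ => pow_zero _]
  have hIα : ∀ f ∈ I, MvPowerSeries.rescale α f ∈ I := fun f hf => by
    simpa [hφ_eq, hφI] using Ideal.mem_map_of_mem φ hf
  obtain ⟨lam₀, hlam₀, hZ₀⟩ :=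
    MvPowerSeries.exists_ne_zero_forall_lineSubst_eq_zero I (hIle.lt_of_ne hIne)
      fun f hf d => MvPowerSeries.homogeneousComponent_mem hIα v ht hα d hf
  obtain ⟨lam, ⟨hlam, hZ⟩, hmin⟩ := (measure fun lam : Fin n → k =>
    (Function.support lam).ncard).wf.has_min {lam | lam ≠ 0 ∧ ∀ f ∈ I, lineSubst lam f = 0}
    ⟨lam₀, hlam₀, hZ₀⟩
  obtain ⟨N, hN, hNeq⟩ := (Set.toFinite (Function.support lam)).toFinset.exists_pow_eq_pow α
    fun i hi j hj => by
      by_contra! h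
      obtain ⟨lam', hlam', hZ', hlt⟩ :=
        MvPowerSeries.exists_forall_lineSubst_eq_zero_support_lt hIα v ht hα hZ
          (by simpa using hi) (by simpa using hj) h
      exact hmin lam' ⟨hlam', hZ'⟩ hlt
  exact ⟨lam, hlam, hZ, N, hN, fun i j hi hj => hNeq i (by simpa using hi) j (by simpa using hj)⟩
end
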